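/- arXiv:1110.1510 — 7 statements merged into one kernel-verified Lean document; each statement's English description precedes it below -/
import Mathlib

section
/- There is exactly one (labeled) dag on n vertices realizing the degree sequence {(0, n-1), (1, n-2), ..., (n-1, 0)} with the i-th vertex having indegree i-1 and outdegree n-i, namely the complete dag with n vertices and C(n,2) arcs, and this dag admits exactly one topological ordering. -/
def Acyclic {V : Type*} (A : V → V → Prop) : Prop := ∀ v, ¬ Relation.TransGen A v v

noncomputable def indeg {V : Type*} (A : V → V → Prop) (v : V) : ℕ :=
  Nat.card {u : V // A u v}

noncomputable def outdeg {V : Type*} (A : V → V → Prop) (v : V) : ℕ :=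
  Nat.card {u : V // A v u}

private lemma card_lt_left (n : ℕ) (i : Fin n) :
    Nat.card {u : Fin n // u < i} = (i : ℕ) := by
  rw [Nat.card_eq_fintype_card, Fintype.card_subtype,
    show Finset.filter (fun x => x < i) Finset.univ = Finset.Iio i by ext x; simp,
    Fin.card_Iio]

private lemma card_lt_right (n : ℕ) (i : Fin n) :
    Nat.card {u : Fin n // i < u} = n - 1 - (i : ℕ) := by
  rw [Nat.card_eq_fintype_card, Fintype.card_subtype,
    show Finset.filter (fun x => i < x) Finset.univ = Finset.Ioi i by ext x; simp,
    Fin.card_Ioi]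

/-- There is exactly one labeled dag on `n` vertices in which the `i`-th vertex has
indegree `i-1` and outdegree `n-i` (0-indexed: vertex `i` has indegree `i` and outdegree
`n-1-i`), namely the complete dag `i < j`, which has `C(n,2)` arcs and admits exactly
one topological ordering. -/
theorem complete_dag_unique (n : ℕ) :
    (∀ A : Fin n → Fin n → Prop, Acyclic A →
      (∀ i : Fin n, indeg A i = (i : ℕ) ∧ outdeg A i = n - 1 - (i : ℕ)) →
      A = fun i j => i < j) ∧
    (∀ i : Fin n, indeg (fun i j : Fin n => i < j) i = (i : ℕ) ∧
      outdeg (fun i j : Fin n => i < j) i = n - 1 - (i : ℕ)) ∧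
    Nat.card {p : Fin n × Fin n // p.1 < p.2} = n.choose 2 ∧
    (∀ σ : Equiv.Perm (Fin n),
      (∀ i j : Fin n, i < j → σ.symm i < σ.symm j) → σ = Equiv.refl (Fin n)) := by
  classical
  refine ⟨?_, ?_, ?_, ?_⟩
  · -- uniqueness of the dag
    intro A hA hdeg
    have hd : ∀ i : Fin n, outdeg A i = n - 1 - (i : ℕ) := fun i => (hdeg i).2
    have noloop : ∀ v, ¬ A v v := fun v h => hA v (Relation.TransGen.single h)
    have no2 : ∀ u v, A u v → A v u → False := fun u v h h' =>
      hA u (Relation.TransGen.head h (Relation.TransGen.single h'))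
    have hT : ∀ i : Fin n, Set.ncard {u : Fin n | i < u} = n - 1 - (i : ℕ) := by
      intro i
      rw [← Nat.card_coe_set_eq]
      exact card_lt_right n i
    have key : ∀ m : ℕ, ∀ i : Fin n, (i : ℕ) = m → ∀ u, A i u ↔ i < u := by
      intro m
      induction m using Nat.strong_induction_on with
      | _ m ih =>
        intro i hi u
        have sub : {u : Fin n | A i u} ⊆ {u : Fin n | i < u} := by
          intro v hv
          rcases lt_trichotomy i v with h | h | h
          · exact h
          · exact absurd (h ▸ hv) (noloop i)
          · exact absurd ((ih v.val (hi ▸ h) v rfl i).mpr h) (fun h' => no2 i v hv h')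
        have hc1 : Set.ncard {u : Fin n | A i u} = n - 1 - (i : ℕ) := by
          rw [← Nat.card_coe_set_eq]
          exact hd i
        have heq : {u : Fin n | A i u} = {u : Fin n | i < u} :=
          Set.eq_of_subset_of_ncard_le sub (by rw [hc1, hT]) (Set.toFinite _)
        exact Set.ext_iff.mp heq u
    funext i j
    exact propext (key i.val i rfl j)
  · -- degrees of the complete dag
    intro i
    exact ⟨card_lt_left n i, card_lt_right n i⟩
  · -- number of arcs
    rw [Nat.card_eq_fintype_card, Fintype.card_subtype, Finset.card_filter,
      Fintype.sum_prod_type]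
    have : ∀ i : Fin n, (∑ j : Fin n, if i < j then 1 else 0) = n - 1 - (i:ℕ) := by
      intro i
      rw [← Finset.card_filter,
        show Finset.filter (fun x => i < x) Finset.univ = Finset.Ioi i by ext x; simp,
        Fin.card_Ioi]
    rw [Finset.sum_congr rfl (fun i _ => this i),
      Fin.sum_univ_eq_sum_range (fun i => n - 1 - i),
      Finset.sum_range_reflect (fun j => j) n, Finset.sum_range_id,
      Nat.choose_two_right]
  · -- unique topological ordering
    intro σ h
    have hm : StrictMono σ.symm := fun i j hij => h i j hij
    let e : Fin n ≃o Fin n := ⟨σ.symm, fun {a b} => hm.le_iff_le⟩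
    have he : e = OrderIso.refl (Fin n) := Subsingleton.elim _ _
    have h2 : σ.symm = Equiv.refl (Fin n) :=
      Equiv.ext fun x => by simpa [e] using congrArg (fun (e : Fin n ≃o Fin n) => e x) he
    calc σ = σ.symm.symm := (Equiv.symm_symm σ).symm
    _ = Equiv.refl (Fin n) := by rw [h2]; rfl
end

section
/- In any dag D realizing the degree sequence S constructed from a 3-Partition instance, the a-vertices form an independent set (no arc joins two a-vertices) and the x-vertices induce a complete dag. -/
/-- Index type for the x-elements: block `X₀` (size `B`), blocks `X₁,…,X_{m-1}`
(size `2B` each), and block `X_m` (size `B`). -/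
abbrev XIdx (m B : ℕ) := Fin B ⊕ (Fin (m - 1) × Fin (2 * B)) ⊕ Fin B

/-- Indegree of the x-element `x_i^j` of the constructed degree sequence. -/
def xInDeg (m B : ℕ) : XIdx m B → ℕ
  | .inl j => (j : ℕ)
  | .inr (.inl (i, j)) =>
      if (j : ℕ) < B then (2 * ((i : ℕ) + 1) - 1) * B + (j : ℕ) + 1
      else (2 * ((i : ℕ) + 1) - 1) * B + (j : ℕ)
  | .inr (.inr j) => (2 * m - 1) * B + (j : ℕ) + 1

/-- Outdegree of the x-element `x_i^j` of the constructed degree sequence. -/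
def xOutDeg (m B : ℕ) : XIdx m B → ℕ
  | .inl j => 2 * m * B - (j : ℕ)
  | .inr (.inl (i, j)) =>
      if (j : ℕ) < B then (2 * m - 2 * ((i : ℕ) + 1) + 1) * B - 1 - (j : ℕ)
      else (2 * m - 2 * ((i : ℕ) + 1) + 1) * B - (j : ℕ)
  | .inr (.inr j) => B - 1 - (j : ℕ)

open Finset

section helpers
variable {α β : Type*} [Fintype α] [Fintype β]

lemma natcard_sum_split (P : α ⊕ β → Prop) :
    Nat.card {u : α ⊕ β // P u} =
      Nat.card {a : α // P (Sum.inl a)} + Nat.card {b : β // P (Sum.inr b)} := by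
  classical
  simp only [Nat.card_eq_fintype_card]
  rw [← Fintype.card_sum]
  apply Fintype.card_congr
  exact ⟨fun x => match x with
      | ⟨.inl a, h⟩ => .inl ⟨a, h⟩
      | ⟨.inr b, h⟩ => .inr ⟨b, h⟩,
    fun x => match x with
      | .inl ⟨a, h⟩ => ⟨.inl a, h⟩
      | .inr ⟨b, h⟩ => ⟨.inr b, h⟩,
    fun x => by rcases x with ⟨a | b, h⟩ <;> rfl,
    fun x => by rcases x with ⟨a, h⟩ | ⟨b, h⟩ <;> rfl⟩

lemma natcard_filter (P : α → Prop) [DecidablePred P] :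
    Nat.card {a // P a} = (univ.filter P).card := by
  rw [Nat.card_eq_fintype_card, Fintype.card_subtype]

lemma sum_card_fiber_snd (P : α → β → Prop) [∀ a b, Decidable (P a b)] :
    ∑ b, (univ.filter fun a => P a b).card
      = (univ.filter fun p : α × β => P p.1 p.2).card := by
  simp only [Finset.card_filter]
  rw [Fintype.sum_prod_type_right]

lemma sum_card_fiber_fst (P : α → β → Prop) [∀ a b, Decidable (P a b)] :
    ∑ a, (univ.filter fun b => P a b).card
      = (univ.filter fun p : α × β => P p.1 p.2).card := by
  simp only [Finset.card_filter]
  rw [Fintype.sum_prod_type]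

end helpers

lemma helperA (N j : ℕ) (h : j ≤ N) : j + (N - j) = N := by omega

lemma helperB (P Q N j : ℕ) (h1 : P + Q = N) (h2 : j + 1 ≤ Q) :
    P + j + 1 + (Q - 1 - j) = N := by omega

lemma helperC (P Q N j : ℕ) (h1 : P + Q = N) (h2 : j ≤ Q) :
    P + j + (Q - j) = N := by omega

lemma final_arith (nxx nxy nyx nyy L K M : ℕ) (hK : K = 2 * L)
    (h1 : nxx + nyx + (nxx + nxy) = M) (h3 : nxy + nyy = L) (h4 : nyx + nyy = L)
    (h5 : nxx + nxx + K ≤ M) : nyy = 0 ∧ nxx + nxx + K = M := by omega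

lemma card_XIdx (m B : ℕ) (hm : 1 ≤ m) : Fintype.card (XIdx m B) = 2 * m * B := by
  obtain ⟨k, rfl⟩ : ∃ k, m = k + 1 := ⟨m - 1, (Nat.succ_pred_eq_of_pos hm).symm⟩
  simp only [XIdx, Fintype.card_sum, Fintype.card_prod, Fintype.card_fin,
    Nat.add_sub_cancel]
  ring

lemma xdeg_sum (m B : ℕ) (hm : 1 ≤ m) (hB : 1 ≤ B) (v : XIdx m B) :
    xInDeg m B v + xOutDeg m B v = 2 * m * B := by
  have hBm : B ≤ 2 * m * B := by
    calc B = 1 * B := (one_mul B).symm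
    _ ≤ 2 * m * B := Nat.mul_le_mul_right B (by omega)
  rcases v with j | ⟨i, j⟩ | j
  · exact helperA (2 * m * B) (j : ℕ) (le_trans (le_of_lt j.isLt) hBm)
  · have hi : (i : ℕ) < m - 1 := i.isLt
    have hj : (j : ℕ) < 2 * B := j.isLt
    have hco : (2 * ((i : ℕ) + 1) - 1) + (2 * m - 2 * ((i : ℕ) + 1) + 1) = 2 * m := by
      omega
    have hkey : (2 * ((i : ℕ) + 1) - 1) * B + (2 * m - 2 * ((i : ℕ) + 1) + 1) * B
        = 2 * m * B := by
      rw [← add_mul, hco]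
    have h3 : 3 * B ≤ (2 * m - 2 * ((i : ℕ) + 1) + 1) * B :=
      Nat.mul_le_mul_right B (by omega)
    simp only [xInDeg, xOutDeg]
    split_ifs with h
    · exact helperB _ _ _ _ hkey (le_trans (by omega) h3)
    · exact helperC _ _ _ _ hkey (le_trans (by omega) h3)
  · have hj : (j : ℕ) < B := j.isLt
    have hkey : (2 * m - 1) * B + 1 * B = 2 * m * B := by
      rw [← add_mul]
      congr 1
      omega
    rw [one_mul] at hkey
    exact helperB _ _ _ _ hkey (by omega)
/-- In any dag realizing the degree sequence constructed from a 3-Partition instance,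
the a-vertices form an independent set and the x-vertices induce a complete dag. -/
theorem aVertices_independent_xVertices_complete (m B : ℕ) (hm : 1 ≤ m) (hB : 1 ≤ B)
    (a : Fin (3 * m) → ℕ) (hsum : ∑ i, a i = m * B)
    (hbound : ∀ i, B < 4 * a i ∧ 2 * a i < B)
    (A : (XIdx m B ⊕ Fin (3 * m)) → (XIdx m B ⊕ Fin (3 * m)) → Prop)
    (hacyc : Acyclic A)
    (hx : ∀ v : XIdx m B, indeg A (.inl v) = xInDeg m B v ∧ outdeg A (.inl v) = xOutDeg m B v)
    (ha : ∀ i : Fin (3 * m), indeg A (.inr i) = a i ∧ outdeg A (.inr i) = a i) :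
    (∀ i j : Fin (3 * m), ¬ A (.inr i) (.inr j)) ∧
    (∀ u v : XIdx m B, u ≠ v → A (.inl u) (.inl v) ∨ A (.inl v) (.inl u)) := by
  classical
  have hirr : ∀ v, ¬ A v v := fun v h => hacyc v (Relation.TransGen.single h)
  have hasym : ∀ u v, A u v → ¬ A v u := fun u v h h' =>
    hacyc u ((Relation.TransGen.single h).tail h')
  -- indegree / outdegree splittings
  have hin : ∀ v : (XIdx m B ⊕ Fin (3 * m)), indeg A v =
      (univ.filter fun u : XIdx m B => A (.inl u) v).card
      + (univ.filter fun u : Fin (3 * m) => A (.inr u) v).card := by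
    intro v
    show Nat.card {u : XIdx m B ⊕ Fin (3 * m) // A u v} = _
    rw [natcard_sum_split (fun u => A u v), natcard_filter, natcard_filter]
  have hout : ∀ v : (XIdx m B ⊕ Fin (3 * m)), outdeg A v =
      (univ.filter fun u : XIdx m B => A v (.inl u)).card
      + (univ.filter fun u : Fin (3 * m) => A v (.inr u)).card := by
    intro v
    show Nat.card {u : XIdx m B ⊕ Fin (3 * m) // A v u} = _
    rw [natcard_sum_split (fun u => A v u), natcard_filter, natcard_filter]
  -- the four arc counts
  set Nxx := (univ.filter fun p : XIdx m B × XIdx m B => A (.inl p.1) (.inl p.2)).card with hNxx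
  set Nxy := (univ.filter fun p : XIdx m B × Fin (3 * m) => A (.inl p.1) (.inr p.2)).card with hNxy
  set Nyx := (univ.filter fun p : Fin (3 * m) × XIdx m B => A (.inr p.1) (.inl p.2)).card with hNyx
  set Nyy := (univ.filter fun p : Fin (3 * m) × Fin (3 * m) => A (.inr p.1) (.inr p.2)).card with hNyy
  have E1 : ∑ v : XIdx m B, xInDeg m B v = Nxx + Nyx := by
    rw [hNxx, hNyx, ← sum_card_fiber_snd (fun u v => A (.inl u) (.inl v)),
      ← sum_card_fiber_snd (fun u v => A (.inr u) (.inl v)), ← Finset.sum_add_distrib]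
    exact Finset.sum_congr rfl fun v _ => by rw [← (hx v).1, hin]
  have E2 : ∑ v : XIdx m B, xOutDeg m B v = Nxx + Nxy := by
    rw [hNxx, hNxy, ← sum_card_fiber_fst (fun v u => A (.inl v) (.inl u)),
      ← sum_card_fiber_fst (fun v u => A (.inl v) (.inr u)), ← Finset.sum_add_distrib]
    exact Finset.sum_congr rfl fun v _ => by rw [← (hx v).2, hout]
  have E3 : m * B = Nxy + Nyy := by
    rw [hNxy, hNyy, ← sum_card_fiber_snd (fun u i => A (.inl u) (.inr i)),
      ← sum_card_fiber_snd (fun u i => A (.inr u) (.inr i)), ← Finset.sum_add_distrib,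
      ← hsum]
    exact Finset.sum_congr rfl fun i _ => by rw [← (ha i).1, hin]
  have E4 : m * B = Nyx + Nyy := by
    rw [hNyx, hNyy, ← sum_card_fiber_fst (fun i u => A (.inr i) (.inl u)),
      ← sum_card_fiber_fst (fun i u => A (.inr i) (.inr u)), ← Finset.sum_add_distrib,
      ← hsum]
    exact Finset.sum_congr rfl fun i _ => by rw [← (ha i).2, hout]
  have hsumdeg : ∑ v : XIdx m B, (xInDeg m B v + xOutDeg m B v)
      = (2 * m * B) * (2 * m * B) := by
    rw [Finset.sum_congr rfl fun v _ => xdeg_sum m B hm hB v, Finset.sum_const,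
      Finset.card_univ, card_XIdx m B hm, smul_eq_mul]
  have h1 : Nxx + Nyx + (Nxx + Nxy) = (2 * m * B) * (2 * m * B) := by
    rw [← E1, ← E2, ← Finset.sum_add_distrib, hsumdeg]
  -- the reversed and diagonal sets
  set G := (univ.filter fun p : XIdx m B × XIdx m B => A (.inl p.2) (.inl p.1)) with hG
  set D := (univ.filter fun p : XIdx m B × XIdx m B => p.1 = p.2) with hD
  have hGF : G.card = Nxx := by
    rw [hG, hNxx]
    exact Finset.card_bij' (fun p _ => (p.2, p.1)) (fun p _ => (p.2, p.1))
      (fun p hp => by simp only [Finset.mem_filter, Finset.mem_univ, true_and] at hp ⊢; exact hp)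
      (fun p hp => by simp only [Finset.mem_filter, Finset.mem_univ, true_and] at hp ⊢; exact hp)
      (fun p _ => rfl) (fun p _ => rfl)
  have hDcard : D.card = 2 * m * B := by
    rw [hD, ← card_XIdx m B hm, ← Finset.card_univ]
    exact (Finset.card_bij' (fun v _ => (v, v)) (fun p _ => p.1)
      (fun v _ => by simp) (fun p _ => Finset.mem_univ _)
      (fun v _ => rfl)
      (fun p hp => by
        simp only [Finset.mem_filter, Finset.mem_univ, true_and] at hp
        exact Prod.ext rfl hp)).symm
  set F := (univ.filter fun p : XIdx m B × XIdx m B => A (.inl p.1) (.inl p.2)) with hF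
  have dFG : Disjoint F G := by
    rw [Finset.disjoint_left]
    intro p hp hq
    rw [hF, Finset.mem_filter] at hp
    rw [hG, Finset.mem_filter] at hq
    exact hasym _ _ hp.2 hq.2
  have dFGD : Disjoint (F ∪ G) D := by
    rw [Finset.disjoint_left]
    intro p hp hq
    rw [hD, Finset.mem_filter] at hq
    rw [Finset.mem_union, hF, hG, Finset.mem_filter, Finset.mem_filter] at hp
    rcases hp with hp | hp
    · exact hirr _ (hq.2 ▸ hp.2)
    · exact hirr _ (hq.2 ▸ hp.2)
  have hunion : (F ∪ G ∪ D).card = Nxx + Nxx + 2 * m * B := by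
    rw [Finset.card_union_of_disjoint dFGD, Finset.card_union_of_disjoint dFG,
      hGF, hDcard, hF, ← hNxx]
  have hcardprod : Fintype.card (XIdx m B × XIdx m B) = (2 * m * B) * (2 * m * B) := by
    rw [Fintype.card_prod, card_XIdx m B hm]
  have h5 : Nxx + Nxx + 2 * m * B ≤ (2 * m * B) * (2 * m * B) := by
    rw [← hunion, ← hcardprod, ← Finset.card_univ]
    exact Finset.card_le_card (Finset.subset_univ _)
  obtain ⟨hyy0, hfull⟩ := final_arith Nxx Nxy Nyx Nyy (m * B) (2 * m * B)
    ((2 * m * B) * (2 * m * B)) (by ring) h1 E3.symm E4.symm h5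
  constructor
  · intro i j hij
    have hmem : (i, j) ∈ (univ.filter fun p : Fin (3 * m) × Fin (3 * m) =>
        A (.inr p.1) (.inr p.2)) := Finset.mem_filter.mpr ⟨Finset.mem_univ _, hij⟩
    rw [Finset.card_eq_zero.mp hyy0] at hmem
    exact absurd hmem (Finset.notMem_empty _)
  · intro u v huv
    have hU : F ∪ G ∪ D = univ := by
      apply Finset.eq_univ_of_card
      rw [hunion, hcardprod, hfull]
    have hmem : (u, v) ∈ F ∪ G ∪ D := hU ▸ Finset.mem_univ (u, v)
    rw [Finset.mem_union, Finset.mem_union, hF, hG, hD, Finset.mem_filter,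
      Finset.mem_filter, Finset.mem_filter] at hmem
    rcases hmem with (h | h) | h
    · exact Or.inl h.2
    · exact Or.inr h.2
    · exact absurd h.2 huv
end

section
/- If a degree sequence S is realizable by a dag, then there exists a realizing topological ordering φ such that whenever s_i ≤_opp s_j and s_i ≠ s_j as pairs, the vertex corresponding to s_i precedes the vertex corresponding to s_j in φ. -/
namespace OppProof

open Finset

def sOpp (x y : ℕ × ℕ) : Prop := x.1 ≤ y.1 ∧ y.2 ≤ x.2 ∧ x ≠ y

instance : DecidableRel sOpp := fun x y => by unfold sOpp; infer_instance

lemma sOpp_trans {x y z : ℕ × ℕ} (h1 : sOpp x y) (h2 : sOpp y z) : sOpp x z := by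
  obtain ⟨a1, b1, ne1⟩ := h1
  obtain ⟨a2, b2, ne2⟩ := h2
  refine ⟨a1.trans a2, b2.trans b1, ?_⟩
  rintro rfl
  exact ne1 (Prod.ext_iff.mpr ⟨le_antisymm a1 a2, le_antisymm b2 b1⟩)

lemma sOpp_asymm {x y : ℕ × ℕ} (h1 : sOpp x y) (h2 : sOpp y x) : False :=
  h1.2.2 (Prod.ext_iff.mpr ⟨le_antisymm h1.1 h2.1, le_antisymm h2.2.1 h1.2.1⟩)

variable {n : ℕ}

def Fwd (N : Fin n → Finset (Fin n)) : Prop := ∀ ⦃r s : Fin n⦄, s ∈ N r → r < s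

def indN (N : Fin n → Finset (Fin n)) (r : Fin n) : ℕ :=
  (univ.filter fun u => r ∈ N u).card

lemma indN_eq (N : Fin n → Finset (Fin n)) (r : Fin n) :
    indN N r = (univ.filter fun u => r ∈ N u).card := rfl

lemma card_filter_split (P : Fin n → Prop) [DecidablePred P] {p q : Fin n} (hpq : p ≠ q) :
    (univ.filter P).card
      = (((univ.erase p).erase q).filter P).card
        + ((if P p then 1 else 0) + (if P q then 1 else 0)) := by
  have e1 : insert q ((univ.erase p).erase q) = (univ : Finset (Fin n)).erase p :=
    insert_erase (mem_erase.2 ⟨hpq.symm, mem_univ q⟩)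
  have e2 : insert p ((univ : Finset (Fin n)).erase p) = univ := insert_erase (mem_univ p)
  have hq : q ∉ ((univ : Finset (Fin n)).erase p).erase q := notMem_erase _ _
  have hp : p ∉ insert q (((univ : Finset (Fin n)).erase p).erase q) := by
    rw [e1]; exact notMem_erase _ _
  calc (univ.filter P).card
      = ∑ x ∈ univ, if P x then 1 else 0 := by rw [card_filter]
    _ = ∑ x ∈ insert p (insert q ((univ.erase p).erase q)), if P x then 1 else 0 := by
        rw [e1, e2]
    _ = (if P p then 1 else 0) + ((if P q then 1 else 0)
          + ∑ x ∈ (univ.erase p).erase q, if P x then 1 else 0) := by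
        rw [sum_insert hp, sum_insert hq]
    _ = (((univ.erase p).erase q).filter P).card
        + ((if P p then 1 else 0) + (if P q then 1 else 0)) := by
        rw [card_filter]; ring

lemma key_ind {γ : Type*} [DecidableEq γ] {A B C A' : Finset γ} (hFA' : A ∩ B ⊆ A')
    (hA'C : A' ⊆ C) {u : γ} (hu : u ∈ C ↔ u ∈ A ∨ u ∈ B) :
    (if u ∈ A' then 1 else 0) + (if u ∈ (C \ A') ∪ (A ∩ B) then 1 else 0)
      = (if u ∈ A then 1 else 0) + (if u ∈ B then 1 else 0) := by
  by_cases h1 : u ∈ A <;> by_cases h2 : u ∈ B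
  · have hA' : u ∈ A' := hFA' (mem_inter.2 ⟨h1, h2⟩)
    simp [h1, h2, hA', mem_union, mem_inter]
  · have hnF : u ∉ A ∩ B := by simp [h2]
    have hC : u ∈ C := hu.2 (Or.inl h1)
    by_cases h3 : u ∈ A'
    · simp [h1, h2, h3, mem_union, mem_sdiff, hnF]
    · simp [h1, h2, h3, mem_union, mem_sdiff, hC, hnF]
  · have hnF : u ∉ A ∩ B := by simp [h1]
    have hC : u ∈ C := hu.2 (Or.inr h2)
    by_cases h3 : u ∈ A'
    · simp [h1, h2, h3, mem_union, mem_sdiff, hnF]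
    · simp [h1, h2, h3, mem_union, mem_sdiff, hC, hnF]
  · have hnC : u ∉ C := by
      intro hC
      rcases hu.1 hC with h | h
      · exact h1 h
      · exact h2 h
    have h3 : u ∉ A' := fun h => hnC (hA'C h)
    simp [h1, h2, h3, mem_union, mem_sdiff, hnC]

lemma mem_ite_singleton {c : Prop} [Decidable c] {x s : Fin n}
    (h : s ∈ (if c then ({x} : Finset (Fin n)) else ∅)) : s = x ∧ c := by
  split at h
  · exact ⟨mem_singleton.1 h, by assumption⟩
  · exact absurd h (notMem_empty s)

lemma card_ite_singleton (c : Prop) [Decidable c] (x : Fin n) :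
    (if c then ({x} : Finset (Fin n)) else ∅).card = if c then 1 else 0 := by
  split <;> simp

lemma swapLemma (N : Fin n → Finset (Fin n)) (hF : Fwd N) (p q : Fin n) (hpq : p < q)
    (α β : Fin n → ℕ) (hin : ∀ r, indN N r = α r) (hout : ∀ r, (N r).card = β r)
    (ha : α q ≤ α p) (hb : β p ≤ β q) :
    ∃ N', Fwd N' ∧ (∀ r, indN N' r = α (Equiv.swap p q r)) ∧
      (∀ r, (N' r).card = β (Equiv.swap p q r)) := by
  have hpqne : p ≠ q := ne_of_lt hpq
  classical
  -- in-side sets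
  set Ii : Finset (Fin n) := univ.filter (fun u => q ∈ N u) with hIidef
  set Ij : Finset (Fin n) := univ.filter (fun u => p ∈ N u) with hIjdef
  have hIicard : Ii.card = α q := hin q
  have hIjcard : Ij.card = α p := hin p
  have hmemIi : ∀ u, u ∈ Ii ↔ q ∈ N u := by intro u; simp [hIidef]
  have hmemIj : ∀ u, u ∈ Ij ↔ p ∈ N u := by intro u; simp [hIjdef]
  have hIjlt : ∀ u ∈ Ij, u < p := fun u hu => hF ((hmemIj u).1 hu)
  have hIilt : ∀ u ∈ Ii, u < q := fun u hu => hF ((hmemIi u).1 hu)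
  set F1 : Finset (Fin n) := Ii ∩ Ij with hF1def
  set C1 : Finset (Fin n) := (Ii ∪ Ij).filter (fun u => u < p) with hC1def
  have hIjC1 : Ij ⊆ C1 := fun u hu => mem_filter.2 ⟨mem_union_right _ hu, hIjlt u hu⟩
  have hF1C1 : F1 ⊆ C1 := fun u hu => hIjC1 (mem_inter.1 hu).2
  have h1 : F1.card ≤ α q := hIicard ▸ card_le_card inter_subset_left
  have h2 : α q ≤ C1.card := le_trans ha (hIjcard ▸ card_le_card hIjC1)
  obtain ⟨Ii', hFIi', hIi'C1, hIi'card⟩ := exists_subsuperset_card_eq hF1C1 h1 h2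
  set Ij' : Finset (Fin n) := (C1 \ Ii') ∪ F1 with hIj'def
  have hIj'C1 : Ij' ⊆ C1 := union_subset sdiff_subset hF1C1
  have hC1lt : ∀ u ∈ C1, u < p := fun u hu => (mem_filter.1 hu).2
  have hIi'lt : ∀ u ∈ Ii', u < p := fun u hu => hC1lt u (hIi'C1 hu)
  have hIj'lt : ∀ u ∈ Ij', u < p := fun u hu => hC1lt u (hIj'C1 hu)
  -- partition of Ii
  set d : ℕ := if q ∈ N p then 1 else 0 with hddef
  set IiP : Finset (Fin n) := Ii.filter (fun u => u < p) with hIiPdef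
  set IiM : Finset (Fin n) := (Ii.filter (fun u => ¬ u < p)).filter (fun u => ¬ u = p)
    with hIiMdef
  have hIipart : IiP.card + d + IiM.card = α q := by
    have e1 := card_filter_add_card_filter_not (s := Ii) (p := fun u => u < p)
    have e2 := card_filter_add_card_filter_not
      (s := Ii.filter (fun u => ¬ u < p)) (p := fun u => u = p)
    have e3 : (Ii.filter (fun u => ¬ u < p)).filter (fun u => u = p)
        = if q ∈ N p then {p} else ∅ := by
      rw [filter_eq']
      by_cases h : q ∈ N p <;> simp [h, hmemIi, lt_irrefl]
    have e4 : ((Ii.filter (fun u => ¬ u < p)).filter (fun u => u = p)).card = d := by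
      rw [e3, hddef]; split <;> simp
    have e5 : IiP.card = (Ii.filter (fun u => u < p)).card := by rw [hIiPdef]
    have e6 : IiM.card = ((Ii.filter (fun u => ¬ u < p)).filter (fun u => ¬ u = p)).card := by
      rw [hIiMdef]
    omega
  -- out-side sets
  set OpM : Finset (Fin n) := (N p).filter (fun w => w < q) with hOpMdef
  set OpQ : Finset (Fin n) := ((N p).filter (fun w => ¬ w < q)).filter (fun w => ¬ w = q)
    with hOpQdef
  have hOpQgt : ∀ w ∈ OpQ, q < w := by
    intro w hw
    have h := mem_filter.1 hw
    have h2 := mem_filter.1 h.1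
    exact lt_of_le_of_ne (not_lt.1 h2.2) (fun e => h.2 e.symm)
  have hOpQsub : OpQ ⊆ N p := fun w hw => (mem_filter.1 (mem_filter.1 hw).1).1
  have hOppart : OpM.card + d + OpQ.card = β p := by
    have e1 := card_filter_add_card_filter_not (s := N p) (p := fun w => w < q)
    have e2 := card_filter_add_card_filter_not
      (s := (N p).filter (fun w => ¬ w < q)) (p := fun w => w = q)
    have e3 : ((N p).filter (fun w => ¬ w < q)).filter (fun w => w = q)
        = if q ∈ N p then {q} else ∅ := by
      rw [filter_eq']
      by_cases h : q ∈ N p <;> simp [h, lt_irrefl]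
    have e4 : (((N p).filter (fun w => ¬ w < q)).filter (fun w => w = q)).card = d := by
      rw [e3, hddef]; split <;> simp
    have e5 : OpM.card = ((N p).filter (fun w => w < q)).card := by rw [hOpMdef]
    have e6 : OpQ.card = (((N p).filter (fun w => ¬ w < q)).filter (fun w => ¬ w = q)).card := by
      rw [hOpQdef]
    have e7 := hout p
    omega
  set F2 : Finset (Fin n) := N p ∩ N q with hF2def
  set C2 : Finset (Fin n) := OpQ ∪ N q with hC2def
  have hNqgt : ∀ w ∈ N q, q < w := fun w hw => hF hw
  have hC2gt : ∀ w ∈ C2, q < w := by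
    intro w hw
    rcases mem_union.1 hw with h | h
    · exact hOpQgt w h
    · exact hNqgt w h
  have hF2OpQ : F2 ⊆ OpQ := by
    intro w hw
    have h := mem_inter.1 hw
    have hq := hNqgt w h.2
    exact mem_filter.2 ⟨mem_filter.2 ⟨h.1, not_lt.2 hq.le⟩, fun e => absurd hq (e ▸ lt_irrefl q)⟩
  have hOpQNq : OpQ ∩ N q = F2 := by
    apply subset_antisymm
    · intro w hw
      have h := mem_inter.1 hw
      exact mem_inter.2 ⟨hOpQsub h.1, h.2⟩
    · intro w hw
      exact mem_inter.2 ⟨hF2OpQ hw, (mem_inter.1 hw).2⟩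
  have hF2C2 : F2 ⊆ C2 := fun w hw => mem_union_right _ (mem_inter.1 hw).2
  have hdle : OpM.card + d ≤ β q := le_trans (by omega) hb
  set t : ℕ := β q - (OpM.card + d) with htdef
  have ht : t + (OpM.card + d) = β q := Nat.sub_add_cancel hdle
  have h3 : F2.card ≤ t := by
    have := card_le_card hF2OpQ
    omega
  have h4 : t ≤ C2.card := by
    have h5 : (N q).card ≤ C2.card := card_le_card subset_union_right
    have := hout q
    omega
  obtain ⟨Op', hF2Op', hOp'C2, hOp'card⟩ := exists_subsuperset_card_eq hF2C2 h3 h4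
  set Oq' : Finset (Fin n) := (C2 \ Op') ∪ F2 with hOq'def
  have hOq'C2 : Oq' ⊆ C2 := union_subset sdiff_subset hF2C2
  have hOq'gt : ∀ w ∈ Oq', q < w := fun w hw => hC2gt w (hOq'C2 hw)
  have hOp'gt : ∀ w ∈ Op', q < w := fun w hw => hC2gt w (hOp'C2 hw)
  -- derived cardinalities
  have hIj'card : Ij'.card + α q = IiP.card + α p := by
    have e3 : (C1 \ Ii').card + Ii'.card = C1.card := card_sdiff_add_card_eq_card hIi'C1
    have e4 : Ij'.card = (C1 \ Ii').card + F1.card := by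
      rw [hIj'def]
      apply card_union_of_disjoint
      rw [disjoint_left]
      intro x hx hx2
      exact (mem_sdiff.1 hx).2 (hFIi' hx2)
    have e5 : C1 = IiP ∪ Ij := by
      ext u
      simp only [hC1def, hIiPdef, mem_filter, mem_union]
      constructor
      · rintro ⟨h | h, hlt⟩
        · exact Or.inl ⟨h, hlt⟩
        · exact Or.inr h
      · rintro (⟨h, hlt⟩ | h)
        · exact ⟨Or.inl h, hlt⟩
        · exact ⟨Or.inr h, hIjlt u h⟩
    have e6 : IiP ∩ Ij = F1 := by
      ext u
      simp only [hIiPdef, hF1def, mem_inter, mem_filter]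
      constructor
      · rintro ⟨⟨h, _⟩, h2⟩
        exact ⟨h, h2⟩
      · rintro ⟨h, h2⟩
        exact ⟨⟨h, hIjlt u h2⟩, h2⟩
    have e7 := card_union_add_card_inter IiP Ij
    rw [← e5, e6] at e7
    omega
  have hOq'card : Oq'.card = β p := by
    have e3 : (C2 \ Op').card + Op'.card = C2.card := card_sdiff_add_card_eq_card hOp'C2
    have e4 : Oq'.card = (C2 \ Op').card + F2.card := by
      rw [hOq'def]
      apply card_union_of_disjoint
      rw [disjoint_left]
      intro x hx hx2
      exact (mem_sdiff.1 hx).2 (hF2Op' hx2)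
    have e7 := card_union_add_card_inter OpQ (N q)
    rw [hOpQNq, ← hC2def] at e7
    have := hout q
    omega
  -- the new dag
  set N' : Fin n → Finset (Fin n) := fun r =>
    if r = p then OpM ∪ (N p).filter (fun w => w = q) ∪ Op'
    else if r = q then Oq'
    else if r < p then ((N r).erase p).erase q
      ∪ (if r ∈ Ii' then {p} else ∅) ∪ (if r ∈ Ij' then {q} else ∅)
    else N r with hN'def
  have hN'p : N' p = OpM ∪ (N p).filter (fun w => w = q) ∪ Op' := by simp [hN'def]
  have hN'q : N' q = Oq' := by simp [hN'def, hpqne.symm]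
  have hN'lt : ∀ r, r ≠ p → r < p → N' r = ((N r).erase p).erase q
      ∪ (if r ∈ Ii' then {p} else ∅) ∪ (if r ∈ Ij' then {q} else ∅) := by
    intro r hr hrlt
    have hrq : r ≠ q := ne_of_lt (hrlt.trans hpq)
    simp [hN'def, hr, hrq, hrlt]
  have hN'else : ∀ r, r ≠ p → r ≠ q → ¬ r < p → N' r = N r := by
    intro r h1 h2 h3
    simp [hN'def, h1, h2, h3]
  -- the `q = q`-edge card
  have hqfiltercard : ((N p).filter (fun w => w = q)).card = d := by
    rw [filter_eq', hddef]
    split <;> simp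
  have hqfiltermem : ∀ w, w ∈ (N p).filter (fun w => w = q) ↔ w = q ∧ q ∈ N p := by
    intro w
    rw [filter_eq']
    by_cases h : q ∈ N p <;> simp [h]
  -- forwardness
  have hFwd' : Fwd N' := by
    intro r s hs
    by_cases hr : r = p
    · subst hr
      rw [hN'p] at hs
      rcases mem_union.1 hs with hs | hs
      · rcases mem_union.1 hs with hs | hs
        · exact hF (mem_filter.1 hs).1
        · exact hF (mem_filter.1 hs).1
      · exact hpq.trans (hOp'gt _ hs)
    by_cases hr2 : r = q
    · subst hr2
      rw [hN'q] at hs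
      exact hOq'gt _ hs
    by_cases hr3 : r < p
    · rw [hN'lt r hr hr3] at hs
      rcases mem_union.1 hs with hs | hs
      · rcases mem_union.1 hs with hs | hs
        · exact hF (mem_of_mem_erase (mem_of_mem_erase hs))
        · rcases mem_ite_singleton hs with ⟨rfl, _⟩
          exact hr3
      · rcases mem_ite_singleton hs with ⟨rfl, _⟩
        exact hr3.trans hpq
    · rw [hN'else r hr hr2 hr3] at hs
      exact hF hs
  refine ⟨N', hFwd', ?_, ?_⟩
  · -- in-degrees
    intro r
    by_cases hr : r = p
    · rw [hr, Equiv.swap_apply_left, indN_eq, ← hIi'card]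
      congr 1
      ext u
      simp only [mem_filter, mem_univ, true_and]
      by_cases hu1 : u = p
      · rw [hu1, hN'p]
        constructor
        · intro h
          rcases mem_union.1 h with h | h
          · rcases mem_union.1 h with h | h
            · exact absurd (hF (mem_filter.1 h).1) (lt_irrefl p)
            · rcases (hqfiltermem p).1 h with ⟨hpq2, _⟩
              exact absurd hpq2 hpqne
          · exact absurd (hpq.trans (hOp'gt p h)) (lt_irrefl p)
        · intro h
          exact absurd (hIi'lt p h) (lt_irrefl p)
      by_cases hu2 : u = q
      · rw [hu2, hN'q]
        constructor
        · intro h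
          exact absurd (hpq.trans (hOq'gt p h)) (lt_irrefl p)
        · intro h
          exact absurd ((hIi'lt q h).trans hpq) (lt_irrefl q)
      by_cases hu3 : u < p
      · rw [hN'lt u hu1 hu3]
        constructor
        · intro h
          rcases mem_union.1 h with h | h
          · rcases mem_union.1 h with h | h
            · exact absurd rfl (mem_erase.1 (mem_of_mem_erase h)).1
            · exact (mem_ite_singleton h).2
          · rcases mem_ite_singleton h with ⟨hpq2, _⟩
            exact absurd hpq2 hpqne
        · intro h
          apply mem_union_left
          apply mem_union_right
          rw [if_pos h]
          exact mem_singleton_self p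
      · rw [hN'else u hu1 hu2 hu3]
        constructor
        · intro h
          exact absurd (hF h) hu3
        · intro h
          exact absurd (hIi'lt u h) hu3
    by_cases hr2 : r = q
    · rw [hr2, Equiv.swap_apply_right, indN_eq]
      have hset : (univ.filter fun u => q ∈ N' u)
          = Ij' ∪ IiM ∪ (if q ∈ N p then ({p} : Finset (Fin n)) else ∅) := by
        ext u
        simp only [mem_filter, mem_univ, true_and, mem_union]
        by_cases hu1 : u = p
        · rw [hu1, hN'p]
          constructor
          · intro h
            rcases mem_union.1 h with h | h
            · rcases mem_union.1 h with h | h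
              · exact absurd (mem_filter.1 h).2 (lt_irrefl q)
              · rcases (hqfiltermem q).1 h with ⟨_, hqNp⟩
                right; rw [if_pos hqNp]; exact mem_singleton_self p
            · exact absurd (hOp'gt q h) (lt_irrefl q)
          · intro h
            rcases h with (h | h) | h
            · exact absurd (hIj'lt p h) (lt_irrefl p)
            · exact absurd rfl (mem_filter.1 h).2
            · rcases mem_ite_singleton h with ⟨_, hqNp⟩
              exact mem_union_left _ (mem_union_right _ ((hqfiltermem q).2 ⟨rfl, hqNp⟩))
        by_cases hu2 : u = q
        · rw [hu2, hN'q]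
          constructor
          · intro h
            exact absurd (hOq'gt q h) (lt_irrefl q)
          · intro h
            rcases h with (h | h) | h
            · exact absurd ((hIj'lt q h).trans hpq) (lt_irrefl q)
            · have hqIi := (mem_filter.1 (mem_filter.1 h).1).1
              exact absurd (hF ((hmemIi q).1 hqIi)) (lt_irrefl q)
            · exact absurd (mem_ite_singleton h).1 hpqne.symm
        by_cases hu3 : u < p
        · rw [hN'lt u hu1 hu3]
          constructor
          · intro h
            rcases mem_union.1 h with h | h
            · rcases mem_union.1 h with h | h
              · exact absurd rfl (mem_erase.1 h).1
              · exact absurd (mem_ite_singleton h).1 hpqne.symm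
            · exact Or.inl (Or.inl (mem_ite_singleton h).2)
          · intro h
            rcases h with (h | h) | h
            · apply mem_union_right
              rw [if_pos h]
              exact mem_singleton_self q
            · exact absurd (mem_filter.1 (mem_filter.1 h).1).2 (by simpa using hu3)
            · exact absurd (mem_ite_singleton h).1 hu1
        · rw [hN'else u hu1 hu2 hu3]
          constructor
          · intro h
            refine Or.inl (Or.inr ?_)
            exact mem_filter.2 ⟨mem_filter.2 ⟨(hmemIi u).2 h, hu3⟩, hu1⟩
          · intro h
            rcases h with (h | h) | h
            · exact absurd (hIj'lt u h) hu3
            · exact (hmemIi u).1 (mem_filter.1 (mem_filter.1 h).1).1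
            · exact absurd (mem_ite_singleton h).1 hu1
      rw [hset]
      have dj1 : Disjoint Ij' IiM := by
        rw [disjoint_left]
        intro x hx hx2
        exact absurd (hIj'lt x hx) (mem_filter.1 (mem_filter.1 hx2).1).2
      have dj2 : Disjoint (Ij' ∪ IiM) (if q ∈ N p then ({p} : Finset (Fin n)) else ∅) := by
        rw [disjoint_left]
        intro x hx hx2
        rcases mem_ite_singleton hx2 with ⟨hxp, _⟩
        rcases mem_union.1 hx with h | h
        · rw [hxp] at h
          exact absurd (hIj'lt p h) (lt_irrefl p)
        · rw [hxp] at h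
          exact absurd rfl (mem_filter.1 h).2
      rw [card_union_of_disjoint dj2, card_union_of_disjoint dj1, card_ite_singleton]
      have hd2 : (if q ∈ N p then 1 else 0) = d := hddef.symm
      rw [hd2]
      omega
    by_cases hr3 : r < q
    · rw [Equiv.swap_apply_of_ne_of_ne hr hr2, indN_eq, ← hin r, indN_eq]
      congr 1
      ext u
      simp only [mem_filter, mem_univ, true_and]
      by_cases hu1 : u = p
      · rw [hu1, hN'p]
        constructor
        · intro h
          rcases mem_union.1 h with h | h
          · rcases mem_union.1 h with h | h
            · exact (mem_filter.1 h).1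
            · exact absurd ((hqfiltermem r).1 h).1 hr2
          · exact absurd (hOp'gt r h) (not_lt.2 hr3.le)
        · intro h
          exact mem_union_left _ (mem_union_left _ (mem_filter.2 ⟨h, hr3⟩))
      by_cases hu2 : u = q
      · rw [hu2, hN'q]
        constructor
        · intro h
          exact absurd (hOq'gt r h) (not_lt.2 hr3.le)
        · intro h
          exact absurd (hNqgt r h) (not_lt.2 hr3.le)
      by_cases hu3 : u < p
      · rw [hN'lt u hu1 hu3]
        constructor
        · intro h
          rcases mem_union.1 h with h | h
          · rcases mem_union.1 h with h | h
            · exact mem_of_mem_erase (mem_of_mem_erase h)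
            · exact absurd (mem_ite_singleton h).1 hr
          · exact absurd (mem_ite_singleton h).1 hr2
        · intro h
          exact mem_union_left _ (mem_union_left _ (mem_erase.2 ⟨hr2, mem_erase.2 ⟨hr, h⟩⟩))
      · rw [hN'else u hu1 hu2 hu3]
    · have hqr : q < r := lt_of_le_of_ne (not_lt.1 hr3) (fun e => hr2 e.symm)
      rw [Equiv.swap_apply_of_ne_of_ne hr hr2, indN_eq, ← hin r, indN_eq]
      rw [card_filter_split (fun u => r ∈ N' u) hpqne,
        card_filter_split (fun u => r ∈ N u) hpqne]
      have hU : (((univ.erase p).erase q).filter (fun u => r ∈ N' u))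
          = ((univ.erase p).erase q).filter (fun u => r ∈ N u) := by
        apply filter_congr
        intro u hu
        have hu1 : u ≠ p := (mem_erase.1 (mem_of_mem_erase hu)).1
        have hu2 : u ≠ q := (mem_erase.1 hu).1
        by_cases hu3 : u < p
        · rw [hN'lt u hu1 hu3]
          constructor
          · intro h
            rcases mem_union.1 h with h | h
            · rcases mem_union.1 h with h | h
              · exact mem_of_mem_erase (mem_of_mem_erase h)
              · exact absurd (mem_ite_singleton h).1 hr
            · exact absurd (mem_ite_singleton h).1 hr2
          · intro h
            exact mem_union_left _ (mem_union_left _ (mem_erase.2 ⟨hr2, mem_erase.2 ⟨hr, h⟩⟩))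
        · rw [hN'else u hu1 hu2 hu3]
      rw [hU]
      have hiff5 : r ∈ N' p ↔ r ∈ Op' := by
        rw [hN'p]
        constructor
        · intro h
          rcases mem_union.1 h with h | h
          · rcases mem_union.1 h with h | h
            · exact absurd ((mem_filter.1 h).2) (not_lt.2 hqr.le)
            · exact absurd ((hqfiltermem r).1 h).1 hr2
          · exact h
        · exact fun h => mem_union_right _ h
      have hiff6 : r ∈ N' q ↔ r ∈ Oq' := by rw [hN'q]
      have hF2Op'2 : N p ∩ N q ⊆ Op' := by rw [← hF2def]; exact hF2Op'
      have hC2r : r ∈ C2 ↔ r ∈ N p ∨ r ∈ N q := by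
        constructor
        · intro h
          rcases mem_union.1 h with h | h
          · exact Or.inl (hOpQsub h)
          · exact Or.inr h
        · rintro (h | h)
          · exact mem_union_left _ (mem_filter.2 ⟨mem_filter.2 ⟨h, hr3⟩, hr2⟩)
          · exact mem_union_right _ h
      have key2 := key_ind (A := N p) (B := N q) (C := C2) (A' := Op') hF2Op'2 hOp'C2 hC2r
      have h7 : Oq' = C2 \ Op' ∪ N p ∩ N q := by rw [hOq'def, hF2def]
      rw [← h7] at key2
      have e8 : (if r ∈ N' p then 1 else 0) + (if r ∈ N' q then 1 else 0)
          = (if r ∈ N p then 1 else 0) + (if r ∈ N q then 1 else 0) := by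
        simp only [hiff5, hiff6]
        exact key2
      omega
  · -- out-degrees
    intro r
    by_cases hr : r = p
    · rw [hr, hN'p, Equiv.swap_apply_left]
      have dj1 : Disjoint OpM ((N p).filter (fun w => w = q)) := by
        rw [disjoint_left]
        intro w hw hw2
        rcases (hqfiltermem w).1 hw2 with ⟨hwq, _⟩
        have hlt := (mem_filter.1 hw).2
        rw [hwq] at hlt
        exact absurd hlt (lt_irrefl q)
      have dj2 : Disjoint (OpM ∪ (N p).filter (fun w => w = q)) Op' := by
        rw [disjoint_left]
        intro w hw hw2
        have hq := hOp'gt w hw2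
        rcases mem_union.1 hw with hw | hw
        · exact absurd ((mem_filter.1 hw).2.trans hq) (lt_irrefl w)
        · rcases (hqfiltermem w).1 hw with ⟨hwq, _⟩
          rw [hwq] at hq
          exact absurd hq (lt_irrefl q)
      rw [card_union_of_disjoint dj2, card_union_of_disjoint dj1, hqfiltercard, hOp'card]
      omega
    by_cases hr2 : r = q
    · rw [hr2, hN'q, Equiv.swap_apply_right, hOq'card]
    by_cases hr3 : r < p
    · rw [hN'lt r hr hr3, Equiv.swap_apply_of_ne_of_ne hr hr2]
      have hple : ∀ w, w ∈ ((N r).erase p).erase q → w ≠ p ∧ w ≠ q := by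
        intro w hw
        exact ⟨(mem_erase.1 (mem_of_mem_erase hw)).1, (mem_erase.1 hw).1⟩
      have dj1 : Disjoint (((N r).erase p).erase q) (if r ∈ Ii' then ({p} : Finset (Fin n)) else ∅) := by
        rw [disjoint_left]
        intro w hw hw2
        rcases mem_ite_singleton hw2 with ⟨rfl, _⟩
        exact (hple _ hw).1 rfl
      have dj2 : Disjoint (((N r).erase p).erase q ∪ (if r ∈ Ii' then {p} else ∅))
          (if r ∈ Ij' then ({q} : Finset (Fin n)) else ∅) := by
        rw [disjoint_left]
        intro w hw hw2
        rcases mem_ite_singleton hw2 with ⟨rfl, _⟩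
        rcases mem_union.1 hw with hw | hw
        · exact (hple _ hw).2 rfl
        · rcases mem_ite_singleton hw with ⟨hqp, _⟩
          exact hpqne hqp.symm
      rw [card_union_of_disjoint dj2, card_union_of_disjoint dj1,
        card_ite_singleton, card_ite_singleton]
      have key := key_ind (A := Ii) (B := Ij) (C := C1) (A' := Ii') hFIi' hIi'C1
        (u := r) (by simp [hC1def, mem_union, hr3])
      rw [← hF1def, ← hIj'def] at key
      have f1 : ∀ (X : Finset (Fin n)) (x : Fin n),
          (X.erase x).card + (if x ∈ X then 1 else 0) = X.card := by
        intro X x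
        by_cases h : x ∈ X
        · rw [if_pos h, card_erase_add_one h]
        · rw [if_neg h, erase_eq_of_notMem h, add_zero]
      have f2 := f1 ((N r).erase p) q
      have f3 := f1 (N r) p
      have f4 : (if q ∈ (N r).erase p then 1 else 0) = (if q ∈ N r then 1 else 0) := by
        by_cases h : q ∈ N r <;> simp [mem_erase, hpqne.symm, h]
      rw [f4] at f2
      have hIir : (if r ∈ Ii then 1 else 0) = (if q ∈ N r then 1 else 0) := by
        by_cases h : q ∈ N r <;> simp [hmemIi, h]
      have hIjr : (if r ∈ Ij then 1 else 0) = (if p ∈ N r then 1 else 0) := by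
        by_cases h : p ∈ N r <;> simp [hmemIj, h]
      rw [hIir, hIjr] at key
      have := hout r
      omega
    · rw [hN'else r hr hr2 hr3, Equiv.swap_apply_of_ne_of_ne hr hr2]
      exact hout r

lemma exists_topo (A : Fin n → Fin n → Prop) (hA : ∀ v, ¬ Relation.TransGen A v v) :
    ∃ σ : Equiv.Perm (Fin n), ∀ i j, A i j → σ.symm i < σ.symm j := by
  classical
  let s : Fin n → Fin n → Prop := fun x y => Relation.TransGen A x y ∨ x = y
  haveI : IsRefl (Fin n) s := ⟨fun x => Or.inr rfl⟩
  haveI : IsTrans (Fin n) s := by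
    constructor
    rintro x y z (h1 | rfl) (h2 | rfl)
    · exact Or.inl (h1.trans h2)
    · exact Or.inl h1
    · exact Or.inl h2
    · exact Or.inr rfl
  haveI : IsAntisymm (Fin n) s := by
    constructor
    rintro x y (h1 | h1) (h2 | h2)
    · exact absurd (h1.trans h2) (hA x)
    · exact h2.symm
    · exact h1
    · exact h1
  haveI : IsPreorder (Fin n) s := ⟨⟩
  haveI : IsPartialOrder (Fin n) s := ⟨⟩
  obtain ⟨t, ht, hst⟩ := extend_partialOrder s
  haveI := ht
  haveI : DecidableRel t := Classical.decRel t
  let l := Finset.univ.sort t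
  have hnd : l.Nodup := Finset.sort_nodup Finset.univ t
  have hlen : l.length = n := by
    simp [l, Finset.length_sort]
  have hmem : ∀ x : Fin n, x ∈ l := fun x => (Finset.mem_sort t).2 (Finset.mem_univ x)
  let e : Fin l.length ≃ Fin n := List.Nodup.getEquivOfForallMemList l hnd hmem
  let σ : Equiv.Perm (Fin n) := (finCongr hlen).symm.trans e
  have hσ : ∀ r : Fin n, σ r = l.get ((finCongr hlen).symm r) := fun r => rfl
  have hsorted : l.Pairwise t := Finset.pairwise_sort Finset.univ t
  refine ⟨σ, fun i j hij => ?_⟩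
  have hij' : t i j := hst i j (Or.inl (Relation.TransGen.single hij))
  have hne : i ≠ j := by
    rintro rfl
    exact hA i (Relation.TransGen.single hij)
  rcases lt_trichotomy (σ.symm i) (σ.symm j) with h | h | h
  · exact h
  · exact absurd (σ.symm.injective h) hne
  · exfalso
    have hlt : ((finCongr hlen).symm (σ.symm j)) < ((finCongr hlen).symm (σ.symm i)) := h
    have := hsorted.rel_get_of_lt hlt
    rw [← hσ, ← hσ, σ.apply_symm_apply, σ.apply_symm_apply] at this
    exact hne (_root_.antisymm hij' this)

variable (a b : Fin n → ℕ)

def invSet (σ : Equiv.Perm (Fin n)) : Finset (Fin n × Fin n) :=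
  univ.filter fun z => z.1 < z.2 ∧ sOpp (a (σ z.2), b (σ z.2)) (a (σ z.1), b (σ z.1))

lemma drive : ∀ (k : ℕ) (σ : Equiv.Perm (Fin n)) (N : Fin n → Finset (Fin n)),
    (invSet a b σ).card ≤ k → Fwd N →
    (∀ r, indN N r = a (σ r)) → (∀ r, (N r).card = b (σ r)) →
    ∃ (σ' : Equiv.Perm (Fin n)) (N' : Fin n → Finset (Fin n)),
      Fwd N' ∧ (∀ r, indN N' r = a (σ' r)) ∧ (∀ r, (N' r).card = b (σ' r)) ∧
      invSet a b σ' = ∅ := by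
  intro k
  induction k with
  | zero =>
    intro σ N hcard hF hin hout
    exact ⟨σ, N, hF, hin, hout, card_eq_zero.1 (Nat.le_zero.1 hcard)⟩
  | succ k ih =>
    intro σ N hcard hF hin hout
    by_cases hz : invSet a b σ = ∅
    · exact ⟨σ, N, hF, hin, hout, hz⟩
    · obtain ⟨z, hzmem, hmin⟩ := exists_min_image (invSet a b σ)
        (fun z => z.2.val - z.1.val) (nonempty_of_ne_empty hz)
      obtain ⟨p, q⟩ := z
      have hzm := mem_filter.1 hzmem
      have hpq : p < q := hzm.2.1
      have hOpp : sOpp (a (σ q), b (σ q)) (a (σ p), b (σ p)) := hzm.2.2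
      obtain ⟨N', hF', hin', hout'⟩ := swapLemma N hF p q hpq
        (fun r => a (σ r)) (fun r => b (σ r)) hin hout hOpp.1 hOpp.2.1
      set τ := Equiv.swap p q with hτdef
      set σ2 : Equiv.Perm (Fin n) := σ * τ with hσ2def
      have hσ2 : ∀ r, σ2 r = σ (τ r) := fun r => rfl
      -- the inversion count decreases
      have hccard : (invSet a b σ2).card < (invSet a b σ).card := by
        have hmap : ∀ z ∈ invSet a b σ2,
            (τ z.1, τ z.2) ∈ (invSet a b σ).erase (p, q) := by
          rintro ⟨r, s⟩ hrs
          have hm := mem_filter.1 hrs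
          have hlt : r < s := hm.2.1
          have hOpp2 : sOpp (a (σ (τ s)), b (σ (τ s))) (a (σ (τ r)), b (σ (τ r))) := hm.2.2
          have hτlt : τ r < τ s := by
            by_cases hrp : r = p
            · by_cases hsq : s = q
              · exfalso
                rw [hrp, hsq, hτdef, Equiv.swap_apply_left, Equiv.swap_apply_right] at hOpp2
                exact sOpp_asymm hOpp hOpp2
              · have hsp : s ≠ p := (ne_of_gt (hrp ▸ hlt))
                have hτr : τ r = q := by rw [hrp, hτdef]; exact Equiv.swap_apply_left p q
                have hτs : τ s = s := by rw [hτdef]; exact Equiv.swap_apply_of_ne_of_ne hsp hsq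
                rw [hτr, hτs]
                by_contra hqs
                have hsltq : s < q := lt_of_le_of_ne (not_lt.1 hqs) hsq
                rw [hτr, hτs] at hOpp2
                have hps : p < s := hrp ▸ hlt
                have hOpp3 := sOpp_trans hOpp2 hOpp
                have hmem2 : (p, s) ∈ invSet a b σ :=
                  mem_filter.2 ⟨mem_univ _, hps, hOpp3⟩
                have := hmin (p, s) hmem2
                simp only at this
                omega
            · by_cases hsq : s = q
              · have hrq : r ≠ q := ne_of_lt (hsq ▸ hlt)
                have hτs : τ s = p := by rw [hsq, hτdef]; exact Equiv.swap_apply_right p q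
                have hτr : τ r = r := by rw [hτdef]; exact Equiv.swap_apply_of_ne_of_ne hrp hrq
                rw [hτr, hτs]
                by_contra hrp2
                have hpltr : p < r := lt_of_le_of_ne (not_lt.1 hrp2) (fun e => hrp e.symm)
                rw [hτr, hτs] at hOpp2
                have hOpp3 := sOpp_trans hOpp hOpp2
                have hmem2 : (r, q) ∈ invSet a b σ :=
                  mem_filter.2 ⟨mem_univ _, hsq ▸ hlt, hOpp3⟩
                have := hmin (r, q) hmem2
                simp only at this
                omega
              · by_cases hrq : r = q
                · have hτr : τ r = p := by rw [hrq, hτdef]; exact Equiv.swap_apply_right p q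
                  have hsp : s ≠ p := ne_of_gt ((hpq.trans (hrq ▸ hlt)))
                  have hτs : τ s = s := by
                    rw [hτdef]; exact Equiv.swap_apply_of_ne_of_ne hsp hsq
                  rw [hτr, hτs]
                  exact hpq.trans (hrq ▸ hlt)
                · by_cases hsp : s = p
                  · have hτs : τ s = q := by rw [hsp, hτdef]; exact Equiv.swap_apply_left p q
                    have hτr : τ r = r := by
                      rw [hτdef]; exact Equiv.swap_apply_of_ne_of_ne hrp hrq
                    rw [hτr, hτs]
                    exact (hsp ▸ hlt).trans hpq
                  · have hτs : τ s = s := by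
                      rw [hτdef]; exact Equiv.swap_apply_of_ne_of_ne hsp hsq
                    have hτr : τ r = r := by
                      rw [hτdef]; exact Equiv.swap_apply_of_ne_of_ne hrp hrq
                    rw [hτr, hτs]
                    exact hlt
          refine mem_erase.2 ⟨?_, mem_filter.2 ⟨mem_univ _, hτlt, hOpp2⟩⟩
          intro he
          have h1 : τ r = p := congrArg Prod.fst he
          have h2 : τ s = q := congrArg Prod.snd he
          have hr2 : r = q := by
            have := congrArg τ h1
            rwa [hτdef, Equiv.swap_apply_self, Equiv.swap_apply_left] at this
          have hs2 : s = p := by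
            have := congrArg τ h2
            rwa [hτdef, Equiv.swap_apply_self, Equiv.swap_apply_right] at this
          rw [hr2, hs2] at hlt
          exact absurd (hpq.trans hlt) (lt_irrefl p)
        have hinj : Set.InjOn (fun z : Fin n × Fin n => (τ z.1, τ z.2))
            ((invSet a b σ2) : Set (Fin n × Fin n)) := by
          rintro ⟨r1, s1⟩ _ ⟨r2, s2⟩ _ he
          have h1 : τ r1 = τ r2 := congrArg Prod.fst he
          have h2 : τ s1 = τ s2 := congrArg Prod.snd he
          rw [Prod.ext_iff]
          exact ⟨τ.injective h1, τ.injective h2⟩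
        have hle := card_le_card_of_injOn _ hmap hinj
        have herase : ((invSet a b σ).erase (p, q)).card = (invSet a b σ).card - 1 :=
          card_erase_of_mem hzmem
        have hpos : 0 < (invSet a b σ).card := card_pos.2 ⟨_, hzmem⟩
        omega
      have hin2 : ∀ r, indN N' r = a (σ2 r) := fun r => hin' r
      have hout2 : ∀ r, (N' r).card = b (σ2 r) := fun r => hout' r
      exact ih σ2 N' (by omega) hF' hin2 hout2

end OppProof

/-- If a degree sequence `(a i, b i)` is realizable by a dag, then there is a realizing
dag together with a topological ordering `σ` such that whenever `(a i, b i) ≤_opp (a j, b j)`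
and the two pairs are distinct, the vertex of `(a i, b i)` precedes that of `(a j, b j)`. -/
theorem realizable_respects_opposed_order (n : ℕ) (a b : Fin n → ℕ)
    (hreal : ∃ A : Fin n → Fin n → Prop, Acyclic A ∧
      ∀ i : Fin n, indeg A i = a i ∧ outdeg A i = b i) :
    ∃ (A : Fin n → Fin n → Prop) (σ : Equiv.Perm (Fin n)),
      Acyclic A ∧
      (∀ i : Fin n, indeg A i = a i ∧ outdeg A i = b i) ∧
      (∀ i j : Fin n, A i j → σ.symm i < σ.symm j) ∧
      (∀ i j : Fin n, a i ≤ a j → b j ≤ b i → (a i, b i) ≠ (a j, b j) →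
        σ.symm i < σ.symm j) := by
  classical
  obtain ⟨A0, hAcy, hdeg⟩ := hreal
  obtain ⟨σ₀, hσ₀⟩ := OppProof.exists_topo A0 hAcy
  set N₀ : Fin n → Finset (Fin n) :=
    fun r => Finset.univ.filter (fun s => A0 (σ₀ r) (σ₀ s)) with hN₀
  have hmemN₀ : ∀ u r, r ∈ N₀ u ↔ A0 (σ₀ u) (σ₀ r) := by intro u r; simp [hN₀]
  have hFwd₀ : OppProof.Fwd N₀ := by
    intro u r h
    have h2 := hσ₀ _ _ ((hmemN₀ u r).1 h)
    simpa using h2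
  have hin₀ : ∀ r, OppProof.indN N₀ r = a (σ₀ r) := by
    intro r
    rw [OppProof.indN_eq, ← (hdeg (σ₀ r)).1]
    unfold indeg
    rw [Nat.card_eq_fintype_card, Fintype.card_subtype]
    apply Finset.card_equiv σ₀
    intro u
    simp [hmemN₀]
  have hout₀ : ∀ r, (N₀ r).card = b (σ₀ r) := by
    intro r
    rw [← (hdeg (σ₀ r)).2]
    unfold outdeg
    rw [Nat.card_eq_fintype_card, Fintype.card_subtype]
    apply Finset.card_equiv σ₀
    intro u
    simp [hN₀]
  obtain ⟨σ', N', hF', hin', hout', hempty⟩ :=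
    OppProof.drive a b (OppProof.invSet a b σ₀).card σ₀ N₀ le_rfl hFwd₀ hin₀ hout₀
  refine ⟨fun i j => σ'.symm j ∈ N' (σ'.symm i), σ', ?_, ?_, ?_, ?_⟩
  · intro v hv
    have hmono : ∀ x y : Fin n,
        Relation.TransGen (fun i j => σ'.symm j ∈ N' (σ'.symm i)) x y →
        σ'.symm x < σ'.symm y := by
      intro x y h
      induction h with
      | single h => exact hF' h
      | tail _ h2 ih => exact ih.trans (hF' h2)
    exact absurd (hmono v v hv) (lt_irrefl _)
  · intro i
    constructor
    · unfold indeg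
      rw [Nat.card_eq_fintype_card, Fintype.card_subtype]
      have h1 := hin' (σ'.symm i)
      rw [OppProof.indN_eq, σ'.apply_symm_apply] at h1
      rw [← h1]
      apply Finset.card_equiv σ'.symm
      intro u
      simp
    · unfold outdeg
      rw [Nat.card_eq_fintype_card, Fintype.card_subtype]
      have h1 := hout' (σ'.symm i)
      rw [σ'.apply_symm_apply] at h1
      rw [← h1]
      apply Finset.card_equiv σ'.symm
      intro u
      simp
  · intro i j hij
    exact hF' hij
  · intro i j hab hba hne
    have hpair : OppProof.sOpp (a i, b i) (a j, b j) := ⟨hab, hba, by simpa using hne⟩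
    rcases lt_trichotomy (σ'.symm i) (σ'.symm j) with h | h | h
    · exact h
    · exfalso
      apply hne
      have hij : i = j := σ'.symm.injective h
      rw [hij]
    · exfalso
      have hmem : (σ'.symm j, σ'.symm i) ∈ OppProof.invSet a b σ' := by
        refine Finset.mem_filter.2 ⟨Finset.mem_univ _, h, ?_⟩
        rw [σ'.apply_symm_apply, σ'.apply_symm_apply]
        exact hpair
      rw [hempty] at hmem
      exact absurd hmem (Finset.notMem_empty _)
end

section
/- Let φ = v_1,...,v_n be a topological ordering of a dag D and suppose v_i is not well-connected, i.e., there exist v_l, v_h among v_1,...,v_{i-1} with the remaining outdegree of v_h at position i-1 strictly greater than that of v_l, (v_l, v_i) ∈ A and (v_h, v_i) ∉ A. Then there exists a vertex u among v_{i+1},...,v_n with (v_h, u) ∈ A and (v_l, u) ∉ A, and the graph D' obtained by replacing arcs (v_l,v_i),(v_h,u) by (v_h,v_i),(v_l,u) is a dag with the same degree sequence and the same topological ordering φ. -/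
/-- The remaining outdegree of `v`: the number of out-neighbors of `v` among the
vertices at position at least `i`. -/
noncomputable def remOut {n : ℕ} (A : Fin n → Fin n → Prop) (v : Fin n) (i : Fin n) : ℕ :=
  Nat.card {u : Fin n // A v u ∧ i ≤ u}

private lemma card_swap {V : Type*} [Finite V] (p : V → Prop) (a b : V)
    (ha : p a) (hb : ¬ p b) :
    Nat.card {x // (p x ∧ x ≠ a) ∨ x = b} = Nat.card {x // p x} := by
  have hset : {x | (p x ∧ x ≠ a) ∨ x = b} = insert b ({x | p x} \ {a}) := by
    ext x
    simp only [Set.mem_insert_iff, Set.mem_diff, Set.mem_setOf_eq, Set.mem_singleton_iff]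
    tauto
  have h1 : Nat.card {x // (p x ∧ x ≠ a) ∨ x = b}
      = ({x | (p x ∧ x ≠ a) ∨ x = b} : Set V).ncard := (Nat.card_coe_set_eq _)
  have h2 : Nat.card {x // p x} = ({x | p x} : Set V).ncard := (Nat.card_coe_set_eq _)
  rw [h1, h2, hset]
  exact Set.ncard_exchange (by simpa using hb) (by simpa using ha)

private lemma card_iff {V : Type*} {p q : V → Prop} (h : ∀ x, p x ↔ q x) :
    Nat.card {x // p x} = Nat.card {x // q x} :=
  Nat.card_congr (Equiv.subtypeEquivRight h)

/-- If `v_i` is not well-connected — there are earlier vertices `v_l, v_h` with the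
remaining outdegree of `v_h` strictly greater than that of `v_l`, `(v_l,v_i) ∈ A` and
`(v_h,v_i) ∉ A` — then there is a later vertex `u` with `(v_h,u) ∈ A`, `(v_l,u) ∉ A`,
and swapping the two arcs yields a dag with the same degrees and the same topological
ordering. -/
theorem swap_arcs_towards_well_connected (n : ℕ) (A : Fin n → Fin n → Prop)
    (htopo : ∀ u v : Fin n, A u v → u < v)
    (i l h : Fin n) (hl : l < i) (hh : h < i)
    (hrem : remOut A l i < remOut A h i)
    (hli : A l i) (hhi : ¬ A h i) :
    ∃ u : Fin n, i < u ∧ A h u ∧ ¬ A l u ∧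
      (let A' : Fin n → Fin n → Prop := fun x y =>
        (A x y ∧ (x, y) ≠ (l, i) ∧ (x, y) ≠ (h, u)) ∨ (x, y) = (h, i) ∨ (x, y) = (l, u)
      (∀ x y : Fin n, A' x y → x < y) ∧ Acyclic A' ∧
        (∀ v : Fin n, indeg A' v = indeg A v ∧ outdeg A' v = outdeg A v)) := by
  have hlh : l ≠ h := fun e => hhi (e ▸ hli)
  obtain ⟨u, hiu, hhu, hlu⟩ : ∃ u : Fin n, i < u ∧ A h u ∧ ¬ A l u := by
    by_contra hc
    push_neg at hc
    have hsub : ∀ x : Fin n, A h x ∧ i ≤ x → A l x ∧ i ≤ x := by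
      rintro x ⟨hx, hix⟩
      have hne : i ≠ x := fun e => hhi (e ▸ hx)
      exact ⟨hc x (lt_of_le_of_ne hix hne) hx, hix⟩
    have : remOut A h i ≤ remOut A l i :=
      Nat.card_le_card_of_injective (fun x => ⟨x.1, hsub x.1 x.2⟩)
        (fun a b e => Subtype.ext (congrArg Subtype.val e : _))
    omega
  have hiu' : i ≠ u := ne_of_lt hiu
  refine ⟨u, hiu, hhu, hlu, ?_⟩
  intro A'
  have hA' : ∀ x y, A' x y ↔
      ((A x y ∧ (x, y) ≠ (l, i) ∧ (x, y) ≠ (h, u)) ∨ (x, y) = (h, i) ∨ (x, y) = (l, u)) :=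
    fun x y => Iff.rfl
  have htopo' : ∀ x y : Fin n, A' x y → x < y := by
    intro x y hxy
    rcases hxy with ⟨ha, -, -⟩ | he | he
    · exact htopo _ _ ha
    · obtain ⟨rfl, rfl⟩ := Prod.mk.inj he; exact hh
    · obtain ⟨rfl, rfl⟩ := Prod.mk.inj he; exact hl.trans hiu
  refine ⟨htopo', ?_, ?_⟩
  · have key : ∀ a b : Fin n, Relation.TransGen A' a b → a < b := by
      intro a b hab
      induction hab with
      | single hs => exact htopo' _ _ hs
      | tail _ hs ih => exact ih.trans (htopo' _ _ hs)
    exact fun v hv => lt_irrefl v (key v v hv)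
  · intro v
    refine ⟨?_, ?_⟩
    · -- indegrees
      by_cases hvi : v = i
      · have hiff : ∀ x, ((A x v ∧ (x, v) ≠ (l, i) ∧ (x, v) ≠ (h, u)) ∨ (x, v) = (h, i)
            ∨ (x, v) = (l, u)) ↔ ((A x v ∧ x ≠ l) ∨ x = h) := by
          intro x
          subst hvi
          simp only [ne_eq, Prod.mk.injEq]
          tauto
        exact (card_iff hiff).trans
          (by subst hvi; exact card_swap (fun x => A x v) l h hli hhi)
      · by_cases hvu : v = u
        · have hiff : ∀ x, ((A x v ∧ (x, v) ≠ (l, i) ∧ (x, v) ≠ (h, u)) ∨ (x, v) = (h, i)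
              ∨ (x, v) = (l, u)) ↔ ((A x v ∧ x ≠ h) ∨ x = l) := by
            intro x
            subst hvu
            simp only [ne_eq, Prod.mk.injEq]
            tauto
          exact (card_iff hiff).trans
            (by subst hvu; exact card_swap (fun x => A x v) h l hhu hlu)
        · have hiff : ∀ x, ((A x v ∧ (x, v) ≠ (l, i) ∧ (x, v) ≠ (h, u)) ∨ (x, v) = (h, i)
              ∨ (x, v) = (l, u)) ↔ A x v := by
            intro x
            simp only [ne_eq, Prod.mk.injEq]
            tauto
          exact card_iff hiff
    · -- outdegrees
      by_cases hvl : v = l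
      · have hiff : ∀ y, ((A v y ∧ (v, y) ≠ (l, i) ∧ (v, y) ≠ (h, u)) ∨ (v, y) = (h, i)
            ∨ (v, y) = (l, u)) ↔ ((A v y ∧ y ≠ i) ∨ y = u) := by
          intro y
          subst hvl
          simp only [ne_eq, Prod.mk.injEq]
          tauto
        exact (card_iff hiff).trans
          (by subst hvl; exact card_swap (fun y => A v y) i u hli hlu)
      · by_cases hvh : v = h
        · have hiff : ∀ y, ((A v y ∧ (v, y) ≠ (l, i) ∧ (v, y) ≠ (h, u)) ∨ (v, y) = (h, i)
              ∨ (v, y) = (l, u)) ↔ ((A v y ∧ y ≠ u) ∨ y = i) := by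
            intro y
            subst hvh
            simp only [ne_eq, Prod.mk.injEq]
            tauto
          exact (card_iff hiff).trans
            (by subst hvh; exact card_swap (fun y => A v y) u i hhu hhi)
        · have hiff : ∀ y, ((A v y ∧ (v, y) ≠ (l, i) ∧ (v, y) ≠ (h, u)) ∨ (v, y) = (h, i)
              ∨ (v, y) = (l, u)) ↔ A v y := by
            intro y
            simp only [ne_eq, Prod.mk.injEq]
            tauto
          exact card_iff hiff
end

section
/- If φ = v_1,...,v_n is a realizing topological ordering for a degree sequence S and there are indices 1 ≤ i < j ≤ n with equal potentials p_i = p_j, then the sequence φ[1,i]φ[j+1,n] is a realizing topological ordering for the degree sequence obtained from S by deleting the degrees of v_{i+1},...,v_j; moreover the potential at position i+l of the new ordering equals p_{j+l} of the old one for all 1 ≤ l ≤ n - j. -/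
noncomputable def potential (n : ℕ) (A : Fin n → Fin n → Prop) (i l : ℕ) : ℕ :=
  Nat.card {v : Fin n // (v : ℕ) < i ∧ l ≤ Nat.card {u : Fin n // A v u ∧ i ≤ (u : ℕ)}}

/-- The embedding of the positions of the ordering `φ[1,i]φ[j+1,n]` into the positions
of the original ordering `φ[1,n]`. -/
def cutEmbed (n i j : ℕ) (hij : i ≤ j) (hjn : j ≤ n) (k : Fin (i + (n - j))) : Fin n :=
  if h : (k : ℕ) < i then ⟨(k : ℕ), by omega⟩
  else ⟨(k : ℕ) + (j - i), by have := k.isLt; omega⟩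

private lemma natCard_subtype {α : Type*} [Fintype α] (P : α → Prop) [DecidablePred P] :
    Nat.card {x : α // P x} = (Finset.univ.filter P).card := by
  simp [Nat.card_eq_fintype_card, Fintype.card_subtype]

private lemma card_filter_ext {m : ℕ} (P Q : Fin m → Prop) [DecidablePred P] [DecidablePred Q]
    (h : ∀ x, P x ↔ Q x) : (Finset.univ.filter P).card = (Finset.univ.filter Q).card := by
  have : Finset.univ.filter P = Finset.univ.filter Q := by
    ext x
    simp only [Finset.mem_filter, Finset.mem_univ, true_and]
    exact h x
  rw [this]

private lemma card_filter_split {m : ℕ} (P Q : Fin m → Prop) [DecidablePred P] [DecidablePred Q] :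
    (Finset.univ.filter P).card
      = (Finset.univ.filter fun x => P x ∧ Q x).card
        + (Finset.univ.filter fun x => P x ∧ ¬ Q x).card := by
  classical
  rw [← Finset.card_union_of_disjoint]
  · have : Finset.univ.filter P
        = (Finset.univ.filter fun x => P x ∧ Q x) ∪ (Finset.univ.filter fun x => P x ∧ ¬ Q x) := by
      ext x
      simp only [Finset.mem_union, Finset.mem_filter, Finset.mem_univ, true_and]
      tauto
    rw [this]
  · rw [Finset.disjoint_left]
    intro a ha hb
    simp only [Finset.mem_filter, Finset.mem_univ, true_and] at ha hb
    tauto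

open Classical in
private lemma potential_filter {m : ℕ} (B : Fin m → Fin m → Prop) (a l : ℕ) :
    potential m B a l = (Finset.univ.filter fun v : Fin m =>
      (v : ℕ) < a ∧ l ≤ Nat.card {u : Fin m // B v u ∧ a ≤ (u : ℕ)}).card := by
  classical
  rw [potential, natCard_subtype]

private lemma exists_perm_of_counts {n : ℕ} (f g : Fin n → ℕ)
    (h : ∀ l, 1 ≤ l → (Finset.univ.filter fun v => l ≤ f v).card
        = (Finset.univ.filter fun v => l ≤ g v).card) :
    ∃ σ : Equiv.Perm (Fin n), ∀ v, f v = g (σ v) := by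
  classical
  have key : ∀ (F : Fin n → ℕ) (m : ℕ), (Finset.univ.filter fun v => m ≤ F v).card
      = (Finset.univ.filter fun v => m = F v).card
        + (Finset.univ.filter fun v => m + 1 ≤ F v).card := by
    intro F m
    rw [← Finset.card_union_of_disjoint]
    · congr 1; ext v; simp; omega
    · rw [Finset.disjoint_left]; intro a ha hb; simp at ha hb; omega
  have hexact : ∀ m : ℕ, (Finset.univ.filter fun v => m = f v).card
      = (Finset.univ.filter fun v => m = g v).card := by
    intro m
    have kf := key f m; have kg := key g m
    rcases Nat.eq_zero_or_pos m with rfl | hm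
    · have hf0 : (Finset.univ.filter fun v : Fin n => 0 ≤ f v).card = n := by simp
      have hg0 : (Finset.univ.filter fun v : Fin n => 0 ≤ g v).card = n := by simp
      have h1 := h (0 + 1) (by omega)
      omega
    · have h1 := h m hm
      have h2 := h (m + 1) (by omega)
      omega
  have hms : Multiset.map f Finset.univ.val = Multiset.map g Finset.univ.val := by
    rw [Multiset.ext]
    intro a
    rw [Multiset.count_map, Multiset.count_map]
    simpa only [Finset.card_def, Finset.filter_val] using hexact a
  set σf := Tuple.sort f with hσf
  set σg := Tuple.sort g with hσg
  have hlist : List.ofFn (f ∘ σf) = List.ofFn (g ∘ σg) := by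
    refine List.Perm.eq_of_sortedLE (List.sortedLE_ofFn_iff.mpr (Tuple.monotone_sort f))
      (List.sortedLE_ofFn_iff.mpr (Tuple.monotone_sort g)) ?_
    have eq1 : ∀ (F : Fin n → ℕ) (σ : Equiv.Perm (Fin n)),
        (↑(List.ofFn (F ∘ σ)) : Multiset ℕ) = Multiset.map F Finset.univ.val := by
      intro F σ
      rw [← Fin.univ_val_map, ← Multiset.map_map, Multiset.map_univ_val_equiv]
    rw [← Multiset.coe_eq_coe, eq1, eq1, hms]
  have hfg : f ∘ σf = g ∘ σg := List.ofFn_injective hlist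
  refine ⟨σf.symm.trans σg, fun v => ?_⟩
  have := congrFun hfg (σf.symm v)
  simpa using this

/-- If `φ` is a realizing topological ordering and the potentials at positions `i < j`
are equal, then `φ[1,i]φ[j+1,n]` is a realizing topological ordering for the degree
sequence obtained by deleting the degrees of `v_{i+1},…,v_j`; moreover the potential at
position `i+l` of the new ordering equals `p_{j+l}` of the old one for `1 ≤ l ≤ n-j`. -/
theorem cut_out_equal_potentials (n : ℕ) (A : Fin n → Fin n → Prop)
    (htopo : ∀ u v : Fin n, A u v → u < v)
    (i j : ℕ) (h1 : 1 ≤ i) (hij : i < j) (hjn : j ≤ n)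
    (hpot : ∀ l, 1 ≤ l → potential n A i l = potential n A j l) :
    ∃ A' : Fin (i + (n - j)) → Fin (i + (n - j)) → Prop,
      (∀ u v, A' u v → u < v) ∧
      (∀ k : Fin (i + (n - j)),
        indeg A' k = indeg A (cutEmbed n i j hij.le hjn k) ∧
        outdeg A' k = outdeg A (cutEmbed n i j hij.le hjn k)) ∧
      (∀ r, 1 ≤ r → r ≤ n - j → ∀ l, 1 ≤ l →
        potential (i + (n - j)) A' (i + r) l = potential n A (j + r) l) := by
  classical
  set N := i + (n - j) with hN
  set e : Fin N → Fin n := cutEmbed n i j hij.le hjn with he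
  have he1 : ∀ k : Fin N, (k : ℕ) < i → (e k : ℕ) = (k : ℕ) := by
    intro k hk; simp only [he, cutEmbed, dif_pos hk]
  have he2 : ∀ k : Fin N, ¬ (k : ℕ) < i → (e k : ℕ) = (k : ℕ) + (j - i) := by
    intro k hk; simp only [he, cutEmbed, dif_neg hk]
  set d : ℕ → Fin n → ℕ :=
    fun m v => (Finset.univ.filter fun u : Fin n => A v u ∧ m ≤ (u : ℕ)).card with hd
  have hdmono : ∀ (m m' : ℕ) (v : Fin n), m ≤ m' → d m' v ≤ d m v := by
    intro m m' v hmm'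
    apply Finset.card_le_card
    intro x hx
    simp only [Finset.mem_filter, Finset.mem_univ, true_and] at hx ⊢
    exact ⟨hx.1, by omega⟩
  have hdpos : ∀ (m : ℕ) (v u : Fin n), A v u → m ≤ (u : ℕ) → 1 ≤ d m v := by
    intro m v u hA hm
    have hu : u ∈ Finset.univ.filter fun u : Fin n => A v u ∧ m ≤ (u : ℕ) := by
      simp only [Finset.mem_filter, Finset.mem_univ, true_and]
      exact ⟨hA, hm⟩
    have := Finset.card_pos.mpr ⟨u, hu⟩
    simp only [hd]
    omega
  have hdEq : ∀ (m : ℕ) (v : Fin n),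
      (Finset.univ.filter fun u : Fin n => A v u ∧ m ≤ (u : ℕ)).card = d m v := fun _ _ => rfl
  set f : Fin n → ℕ := fun v => if (v : ℕ) < i then d i v else 0 with hf
  set g : Fin n → ℕ := fun w => if (w : ℕ) < j then d j w else 0 with hg
  have hcount : ∀ l, 1 ≤ l → (Finset.univ.filter fun v => l ≤ f v).card
      = (Finset.univ.filter fun v => l ≤ g v).card := by
    intro l hl
    have hpd := hpot l hl
    rw [potential_filter, potential_filter] at hpd
    calc (Finset.univ.filter fun v => l ≤ f v).card
        = (Finset.univ.filter fun v : Fin n =>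
            (v : ℕ) < i ∧ l ≤ Nat.card {u : Fin n // A v u ∧ i ≤ (u : ℕ)}).card := by
          apply card_filter_ext
          intro v
          have hnc : Nat.card {u : Fin n // A v u ∧ i ≤ (u : ℕ)} = d i v := by
            rw [natCard_subtype]
          rw [hnc]
          simp only [hf]
          split <;> omega
      _ = (Finset.univ.filter fun v : Fin n =>
            (v : ℕ) < j ∧ l ≤ Nat.card {u : Fin n // A v u ∧ j ≤ (u : ℕ)}).card := hpd
      _ = (Finset.univ.filter fun v => l ≤ g v).card := by
          apply card_filter_ext
          intro v
          have hnc : Nat.card {u : Fin n // A v u ∧ j ≤ (u : ℕ)} = d j v := by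
            rw [natCard_subtype]
          rw [hnc]
          simp only [hg]
          split <;> omega
  obtain ⟨σ, hσ⟩ := exists_perm_of_counts f g hcount
  have hσ' : ∀ v : Fin n, (v : ℕ) < i →
      (if ((σ v : Fin n) : ℕ) < j then d j (σ v) else 0) = d i v := by
    intro v hv
    have h2 := hσ v
    simp only [hf, hg, if_pos hv] at h2
    exact h2.symm
  have hsymlt : ∀ w : Fin n, (w : ℕ) < j → 1 ≤ d j w → ((σ.symm w : Fin n) : ℕ) < i := by
    intro w hw hd1
    by_contra hc
    have h2 := hσ (σ.symm w)
    rw [Equiv.apply_symm_apply] at h2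
    simp only [hf, hg, if_neg hc, if_pos hw] at h2
    omega
  set A' : Fin N → Fin N → Prop := fun u v =>
    if (u : ℕ) < i ∧ i ≤ (v : ℕ) then (((σ (e u) : Fin n) : ℕ) < j ∧ A (σ (e u)) (e v))
    else A (e u) (e v) with hA'
  have hA'1 : ∀ u v : Fin N, ¬ i ≤ (v : ℕ) → (A' u v ↔ A (e u) (e v)) := by
    intro u v hv; simp only [hA']; rw [if_neg (by tauto)]
  have hA'2 : ∀ u v : Fin N, i ≤ (u : ℕ) → (A' u v ↔ A (e u) (e v)) := by
    intro u v hu; simp only [hA']; rw [if_neg (by omega)]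
  have hA'3 : ∀ u v : Fin N, (u : ℕ) < i → i ≤ (v : ℕ) →
      (A' u v ↔ (((σ (e u) : Fin n) : ℕ) < j ∧ A (σ (e u)) (e v))) := by
    intro u v hu hv; simp only [hA']; rw [if_pos ⟨hu, hv⟩]
  -- the central tail bijection
  have hbij_tail : ∀ (w : Fin n) (s : ℕ), i ≤ s →
      (Finset.univ.filter fun v : Fin N => s ≤ (v : ℕ) ∧ A w (e v)).card
      = (Finset.univ.filter fun u : Fin n => A w u ∧ s + (j - i) ≤ (u : ℕ)).card := by
    intro w s hs
    refine Finset.card_nbij' (fun v => e v)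
      (fun u => if h : (u : ℕ) < j - i then ⟨0, by omega⟩
        else ⟨(u : ℕ) - (j - i), by have := u.isLt; omega⟩) ?_ ?_ ?_ ?_
    · intro v hv
      simp only [Finset.coe_filter, Set.mem_setOf_eq, Finset.mem_filter, Finset.mem_univ, true_and] at hv ⊢
      have hvi : ¬ (v : ℕ) < i := by omega
      have hev := he2 v hvi
      exact ⟨hv.2, by omega⟩
    · intro u hu
      simp only [Finset.coe_filter, Set.mem_setOf_eq, Finset.mem_filter, Finset.mem_univ, true_and] at hu ⊢
      have huj : ¬ (u : ℕ) < j - i := by omega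
      rw [dif_neg huj]
      set v0 : Fin N := ⟨(u : ℕ) - (j - i), by have := u.isLt; omega⟩ with hv0
      have hvi : ¬ (v0 : ℕ) < i := by simp only [hv0]; omega
      have hev : (e v0 : ℕ) = (u : ℕ) := by rw [he2 v0 hvi]; simp only [hv0]; omega
      have hevu : e v0 = u := Fin.ext hev
      refine ⟨by simp only [hv0]; omega, ?_⟩
      rw [hevu]; exact hu.1
    · intro v hv
      simp only [Finset.coe_filter, Set.mem_setOf_eq, Finset.mem_filter, Finset.mem_univ, true_and] at hv
      have hvi : ¬ (v : ℕ) < i := by omega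
      have hev := he2 v hvi
      beta_reduce
      rw [dif_neg (by omega)]
      apply Fin.ext
      simp only [Fin.val_mk]
      omega
    · intro u hu
      simp only [Finset.coe_filter, Set.mem_setOf_eq, Finset.mem_filter, Finset.mem_univ, true_and] at hu
      have huj : ¬ (u : ℕ) < j - i := by omega
      beta_reduce
      rw [dif_neg huj]
      apply Fin.ext
      rw [he2]
      · simp only [Fin.val_mk]; omega
      · simp only [Fin.val_mk]; omega
  refine ⟨A', ?_, ?_, ?_⟩
  · -- topological
    intro u v huv
    rw [Fin.lt_def]
    by_cases hc : (u : ℕ) < i ∧ i ≤ (v : ℕ)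
    · omega
    · have h2 : A (e u) (e v) := by
        simp only [hA'] at huv; rw [if_neg hc] at huv; exact huv
      have h3 := htopo _ _ h2
      rw [Fin.lt_def] at h3
      by_cases hu : (u : ℕ) < i <;> by_cases hv : (v : ℕ) < i
      · have := he1 u hu; have := he1 v hv; omega
      · omega
      · have := he2 u hu; have := he1 v hv; omega
      · have := he2 u hu; have := he2 v hv; omega
  · -- degrees
    intro k
    constructor
    · -- indeg
      simp only [indeg, natCard_subtype]
      by_cases hki : (k : ℕ) < i
      · have hek := he1 k hki
        refine Finset.card_nbij' (fun u => e u)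
          (fun w => if h : (w : ℕ) < i then ⟨(w : ℕ), by omega⟩ else ⟨0, by omega⟩) ?_ ?_ ?_ ?_
        · intro u hu
          simp only [Finset.coe_filter, Set.mem_setOf_eq, Finset.mem_filter, Finset.mem_univ, true_and] at hu ⊢
          exact (hA'1 u k (by omega)).mp hu
        · intro w hw
          simp only [Finset.coe_filter, Set.mem_setOf_eq, Finset.mem_filter, Finset.mem_univ, true_and] at hw ⊢
          have hwk := htopo w (e k) hw
          rw [Fin.lt_def] at hwk
          have hwi : (w : ℕ) < i := by omega
          rw [dif_pos hwi]
          set u0 : Fin N := ⟨(w : ℕ), by omega⟩ with hu0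
          have heu : e u0 = w := Fin.ext (by rw [he1 u0 (by simp only [hu0]; omega)])
          rw [hA'1 u0 k (by omega), heu]
          exact hw
        · intro u hu
          simp only [Finset.coe_filter, Set.mem_setOf_eq, Finset.mem_filter, Finset.mem_univ, true_and] at hu
          have hAu := (hA'1 u k (by omega)).mp hu
          have huk := htopo _ _ hAu
          rw [Fin.lt_def] at huk
          beta_reduce
          by_cases hui : (u : ℕ) < i
          · have heu := he1 u hui
            rw [dif_pos (by omega)]
            apply Fin.ext
            simp only [Fin.val_mk]
            omega
          · have heu := he2 u hui
            exfalso; omega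
        · intro w hw
          simp only [Finset.coe_filter, Set.mem_setOf_eq, Finset.mem_filter, Finset.mem_univ, true_and] at hw
          have hwk := htopo w (e k) hw
          rw [Fin.lt_def] at hwk
          have hwi : (w : ℕ) < i := by omega
          beta_reduce
          rw [dif_pos hwi]
          apply Fin.ext
          rw [he1]
          simp only [Fin.val_mk]
          omega
      · -- suffix position
        have hek := he2 k hki
        have hekj : j ≤ (e k : ℕ) := by omega
        refine Finset.card_nbij' (fun u => if (u : ℕ) < i then σ (e u) else e u)
          (fun w => if h : (w : ℕ) < j then
              (if h2 : ((σ.symm w : Fin n) : ℕ) < i then ⟨((σ.symm w : Fin n) : ℕ), by omega⟩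
               else ⟨0, by omega⟩)
            else ⟨(w : ℕ) - (j - i), by have := w.isLt; omega⟩) ?_ ?_ ?_ ?_
        · intro u hu
          simp only [Finset.coe_filter, Set.mem_setOf_eq, Finset.mem_filter, Finset.mem_univ, true_and] at hu ⊢
          by_cases hui : (u : ℕ) < i
          · rw [if_pos hui]
            exact ((hA'3 u k hui (by omega)).mp hu).2
          · rw [if_neg hui]
            exact (hA'2 u k (by omega)).mp hu
        · intro w hw
          simp only [Finset.coe_filter, Set.mem_setOf_eq, Finset.mem_filter, Finset.mem_univ, true_and] at hw ⊢
          by_cases hwj : (w : ℕ) < j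
          · have hd1 : 1 ≤ d j w := hdpos j w (e k) hw hekj
            have hsi := hsymlt w hwj hd1
            rw [dif_pos hwj, dif_pos hsi]
            set u0 : Fin N := ⟨((σ.symm w : Fin n) : ℕ), by omega⟩ with hu0
            have heu : e u0 = σ.symm w := Fin.ext (by rw [he1 u0 (by simp only [hu0]; omega)])
            rw [hA'3 u0 k (by simp only [hu0]; omega) (by omega), heu, Equiv.apply_symm_apply]
            exact ⟨hwj, hw⟩
          · rw [dif_neg hwj]
            set u0 : Fin N := ⟨(w : ℕ) - (j - i), by have := w.isLt; omega⟩ with hu0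
            have hui : ¬ (u0 : ℕ) < i := by simp only [hu0]; omega
            have heu : e u0 = w := Fin.ext (by rw [he2 u0 hui]; simp only [hu0]; omega)
            rw [hA'2 u0 k (by omega), heu]
            exact hw
        · intro u hu
          simp only [Finset.coe_filter, Set.mem_setOf_eq, Finset.mem_filter, Finset.mem_univ, true_and] at hu
          beta_reduce
          by_cases hui : (u : ℕ) < i
          · have hσu := ((hA'3 u k hui (by omega)).mp hu).1
            have hsymu : ((σ.symm (σ (e u)) : Fin n) : ℕ) < i := by
              rw [Equiv.symm_apply_apply, he1 u hui]; exact hui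
            rw [if_pos hui, dif_pos hσu, dif_pos hsymu]
            apply Fin.ext
            simp only [Fin.val_mk, Equiv.symm_apply_apply]
            exact he1 u hui
          · have hAu := (hA'2 u k (by omega)).mp hu
            have heu := he2 u hui
            rw [if_neg hui, dif_neg (by omega)]
            apply Fin.ext
            simp only [Fin.val_mk]
            omega
        · intro w hw
          simp only [Finset.coe_filter, Set.mem_setOf_eq, Finset.mem_filter, Finset.mem_univ, true_and] at hw
          beta_reduce
          by_cases hwj : (w : ℕ) < j
          · have hd1 : 1 ≤ d j w := hdpos j w (e k) hw hekj
            have hsi := hsymlt w hwj hd1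
            rw [dif_pos hwj, dif_pos hsi, if_pos (by simp only [Fin.val_mk]; exact hsi)]
            rw [Equiv.apply_eq_iff_eq_symm_apply]
            apply Fin.ext
            rw [he1]
            simp only [Fin.val_mk]
            omega
          · rw [dif_neg hwj]
            have hui : ¬ (((⟨(w : ℕ) - (j - i), by have := w.isLt; omega⟩ : Fin N)) : ℕ) < i := by
              simp only [Fin.val_mk]; omega
            rw [if_neg hui]
            apply Fin.ext
            rw [he2]
            · simp only [Fin.val_mk]; omega
            · simp only [Fin.val_mk]; omega
    · -- outdeg
      simp only [outdeg, natCard_subtype]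
      by_cases hki : (k : ℕ) < i
      · -- prefix position
        have hek := he1 k hki
        rw [card_filter_split (fun v : Fin N => A' k v) (fun v => (v : ℕ) < i),
          card_filter_split (fun u : Fin n => A (e k) u) (fun u => (u : ℕ) < i)]
        congr 1
        · -- edges into the prefix
          refine Finset.card_nbij' (fun v => e v)
            (fun w => if h : (w : ℕ) < i then ⟨(w : ℕ), by omega⟩ else ⟨0, by omega⟩) ?_ ?_ ?_ ?_
          · intro v hv
            simp only [Finset.coe_filter, Set.mem_setOf_eq, Finset.mem_filter, Finset.mem_univ, true_and] at hv ⊢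
            have hAv := (hA'1 k v (by omega)).mp hv.1
            have := he1 v hv.2
            exact ⟨hAv, by omega⟩
          · intro w hw
            simp only [Finset.coe_filter, Set.mem_setOf_eq, Finset.mem_filter, Finset.mem_univ, true_and] at hw ⊢
            rw [dif_pos hw.2]
            set v0 : Fin N := ⟨(w : ℕ), by omega⟩ with hv0
            have hev : e v0 = w := Fin.ext (by rw [he1 v0 (by simp only [hv0]; omega)])
            refine ⟨?_, by simp only [hv0]; omega⟩
            rw [hA'1 k v0 (by simp only [hv0]; omega), hev]
            exact hw.1
          · intro v hv
            simp only [Finset.coe_filter, Set.mem_setOf_eq, Finset.mem_filter, Finset.mem_univ, true_and] at hv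
            have hev := he1 v hv.2
            beta_reduce
            rw [dif_pos (by omega)]
            apply Fin.ext
            simp only [Fin.val_mk]
            omega
          · intro w hw
            simp only [Finset.coe_filter, Set.mem_setOf_eq, Finset.mem_filter, Finset.mem_univ, true_and] at hw
            beta_reduce
            rw [dif_pos hw.2]
            apply Fin.ext
            rw [he1]
            simp only [Fin.val_mk]
            omega
        · -- edges into the suffix: both count d i (e k)
          have hrhs : (Finset.univ.filter fun u : Fin n => A (e k) u ∧ ¬ (u : ℕ) < i).card
              = d i (e k) := by
            rw [hd]
            apply card_filter_ext
            intro u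
            constructor
            · rintro ⟨h3, h4⟩; exact ⟨h3, by omega⟩
            · rintro ⟨h3, h4⟩; exact ⟨h3, by omega⟩
          rw [hrhs]
          have hekival : ((e k : Fin n) : ℕ) < i := by omega
          have hσk := hσ' (e k) hekival
          by_cases hσj : ((σ (e k) : Fin n) : ℕ) < j
          · rw [if_pos hσj] at hσk
            have hlhs : (Finset.univ.filter fun v : Fin N => A' k v ∧ ¬ (v : ℕ) < i).card
                = (Finset.univ.filter fun v : Fin N => i ≤ (v : ℕ) ∧ A (σ (e k)) (e v)).card := by
              apply card_filter_ext
              intro v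
              constructor
              · rintro ⟨h3, h4⟩
                exact ⟨by omega, ((hA'3 k v hki (by omega)).mp h3).2⟩
              · rintro ⟨h3, h4⟩
                exact ⟨(hA'3 k v hki h3).mpr ⟨hσj, h4⟩, by omega⟩
            rw [hlhs, hbij_tail (σ (e k)) i le_rfl, ← hσk, hd]
            apply card_filter_ext
            intro u
            constructor
            · rintro ⟨h3, h4⟩; exact ⟨h3, by omega⟩
            · rintro ⟨h3, h4⟩; exact ⟨h3, by omega⟩
          · rw [if_neg hσj] at hσk
            rw [← hσk]
            apply Finset.card_eq_zero.mpr
            rw [Finset.filter_eq_empty_iff]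
            rintro v - ⟨h3, h4⟩
            exact hσj ((hA'3 k v hki (by omega)).mp h3).1
      · -- suffix position
        have hek := he2 k hki
        have hekj : j ≤ (e k : ℕ) := by omega
        have hlhs : (Finset.univ.filter fun v : Fin N => A' k v)
            = Finset.univ.filter fun v : Fin N => i ≤ (v : ℕ) ∧ A (e k) (e v) := by
          ext v
          simp only [Finset.mem_filter, Finset.mem_univ, true_and]
          constructor
          · intro h3
            have hAv := (hA'2 k v (by omega)).mp h3
            have h4 := htopo _ _ hAv
            rw [Fin.lt_def] at h4
            have hvi : ¬ (v : ℕ) < i := by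
              intro hvi
              have := he1 v hvi
              omega
            exact ⟨by omega, hAv⟩
          · rintro ⟨h3, h4⟩
            exact (hA'2 k v (by omega)).mpr h4
        have hrhs : (Finset.univ.filter fun u : Fin n => A (e k) u)
            = Finset.univ.filter fun u : Fin n => A (e k) u ∧ i + (j - i) ≤ (u : ℕ) := by
          ext u
          simp only [Finset.mem_filter, Finset.mem_univ, true_and]
          constructor
          · intro h3
            have h4 := htopo _ _ h3
            rw [Fin.lt_def] at h4
            exact ⟨h3, by omega⟩
          · tauto
        rw [hlhs, hrhs]
        exact hbij_tail (e k) i le_rfl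
  · -- potentials
    intro r hr1 hr2 l hl
    rw [potential_filter, potential_filter]
    have hDM : ∀ w : Fin n, Nat.card {u : Fin n // A w u ∧ j + r ≤ (u : ℕ)} = d (j + r) w := by
      intro w
      rw [natCard_subtype]
    have hDA : ∀ v : Fin N, (v : ℕ) < i →
        Nat.card {u : Fin N // A' v u ∧ i + r ≤ (u : ℕ)}
          = if ((σ (e v) : Fin n) : ℕ) < j then Nat.card {u : Fin n // A (σ (e v)) u ∧ j + r ≤ (u : ℕ)} else 0 := by
      intro v hv
      by_cases hσv : ((σ (e v) : Fin n) : ℕ) < j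
      · rw [if_pos hσv, natCard_subtype, natCard_subtype]
        have e1 : (Finset.univ.filter fun u : Fin N => A' v u ∧ i + r ≤ (u : ℕ)).card
            = (Finset.univ.filter fun u : Fin N => i + r ≤ (u : ℕ) ∧ A (σ (e v)) (e u)).card := by
          apply card_filter_ext
          intro u
          constructor
          · rintro ⟨h3, h4⟩
            exact ⟨h4, ((hA'3 v u hv (by omega)).mp h3).2⟩
          · rintro ⟨h3, h4⟩
            exact ⟨(hA'3 v u hv (by omega)).mpr ⟨hσv, h4⟩, h3⟩
        rw [e1, hbij_tail (σ (e v)) (i + r) (by omega)]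
        apply card_filter_ext
        intro u
        constructor
        · rintro ⟨h3, h4⟩; exact ⟨h3, by omega⟩
        · rintro ⟨h3, h4⟩; exact ⟨h3, by omega⟩
      · rw [if_neg hσv, natCard_subtype]
        apply Finset.card_eq_zero.mpr
        rw [Finset.filter_eq_empty_iff]
        rintro u - ⟨h3, h4⟩
        exact hσv ((hA'3 v u hv (by omega)).mp h3).1
    have hDB : ∀ v : Fin N, ¬ (v : ℕ) < i →
        Nat.card {u : Fin N // A' v u ∧ i + r ≤ (u : ℕ)}
          = Nat.card {u : Fin n // A (e v) u ∧ j + r ≤ (u : ℕ)} := by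
      intro v hv
      rw [natCard_subtype, natCard_subtype]
      have e1 : (Finset.univ.filter fun u : Fin N => A' v u ∧ i + r ≤ (u : ℕ)).card
          = (Finset.univ.filter fun u : Fin N => i + r ≤ (u : ℕ) ∧ A (e v) (e u)).card := by
        apply card_filter_ext
        intro u
        constructor
        · rintro ⟨h3, h4⟩
          exact ⟨h4, (hA'2 v u (by omega)).mp h3⟩
        · rintro ⟨h3, h4⟩
          exact ⟨(hA'2 v u (by omega)).mpr h4, h3⟩
      rw [e1, hbij_tail (e v) (i + r) (by omega)]
      apply card_filter_ext
      intro u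
      constructor
      · rintro ⟨h3, h4⟩; exact ⟨h3, by omega⟩
      · rintro ⟨h3, h4⟩; exact ⟨h3, by omega⟩
    rw [card_filter_split _ (fun v : Fin N => (v : ℕ) < i),
      card_filter_split _ (fun w : Fin n => (w : ℕ) < j)]
    congr 1
    · -- prefix parts, via σ ∘ e
      refine Finset.card_nbij' (fun v => σ (e v))
        (fun w => if h2 : ((σ.symm w : Fin n) : ℕ) < i
          then ⟨((σ.symm w : Fin n) : ℕ), by omega⟩ else ⟨0, by omega⟩) ?_ ?_ ?_ ?_
      · intro v hv
        simp only [Finset.coe_filter, Set.mem_setOf_eq, Finset.mem_filter, Finset.mem_univ, true_and] at hv ⊢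
        obtain ⟨⟨hvr, hvD⟩, hvi⟩ := hv
        have hDv := hDA v hvi
        by_cases hσv : ((σ (e v) : Fin n) : ℕ) < j
        · rw [if_pos hσv] at hDv
          rw [hDv] at hvD
          exact ⟨⟨by omega, hvD⟩, hσv⟩
        · rw [if_neg hσv] at hDv
          rw [hDv] at hvD
          omega
      · intro w hw
        simp only [Finset.coe_filter, Set.mem_setOf_eq, Finset.mem_filter, Finset.mem_univ, true_and] at hw ⊢
        obtain ⟨⟨hwr, hwD⟩, hwj⟩ := hw
        rw [hDM] at hwD
        have hd1 : 1 ≤ d j w := le_trans (le_trans hl hwD) (hdmono j (j + r) w (by omega))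
        have hsi := hsymlt w hwj hd1
        rw [dif_pos hsi]
        set v0 : Fin N := ⟨((σ.symm w : Fin n) : ℕ), by omega⟩ with hv0
        have hv0i : (v0 : ℕ) < i := by simp only [hv0]; omega
        have heu : e v0 = σ.symm w := Fin.ext (by rw [he1 v0 hv0i])
        have hDv := hDA v0 hv0i
        rw [heu, Equiv.apply_symm_apply, if_pos hwj, hDM] at hDv
        rw [hDv]
        exact ⟨⟨by omega, by omega⟩, hv0i⟩
      · intro v hv
        simp only [Finset.coe_filter, Set.mem_setOf_eq, Finset.mem_filter, Finset.mem_univ, true_and] at hv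
        obtain ⟨⟨hvr, hvD⟩, hvi⟩ := hv
        have hDv := hDA v hvi
        have hσv : ((σ (e v) : Fin n) : ℕ) < j := by
          by_contra hc
          rw [if_neg hc] at hDv
          rw [hDv] at hvD
          omega
        have hsymv : ((σ.symm (σ (e v)) : Fin n) : ℕ) < i := by
          rw [Equiv.symm_apply_apply, he1 v hvi]; exact hvi
        beta_reduce
        rw [dif_pos hsymv]
        apply Fin.ext
        simp only [Fin.val_mk, Equiv.symm_apply_apply]
        exact he1 v hvi
      · intro w hw
        simp only [Finset.coe_filter, Set.mem_setOf_eq, Finset.mem_filter, Finset.mem_univ, true_and] at hw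
        obtain ⟨⟨hwr, hwD⟩, hwj⟩ := hw
        rw [hDM] at hwD
        have hd1 : 1 ≤ d j w := le_trans (le_trans hl hwD) (hdmono j (j + r) w (by omega))
        have hsi := hsymlt w hwj hd1
        beta_reduce
        rw [dif_pos hsi, Equiv.apply_eq_iff_eq_symm_apply]
        apply Fin.ext
        rw [he1]
        simp only [Fin.val_mk]
        omega
    · -- middle parts, via e
      refine Finset.card_nbij' (fun v => e v)
        (fun w => if h : (w : ℕ) < j - i then ⟨0, by omega⟩
          else ⟨(w : ℕ) - (j - i), by have := w.isLt; omega⟩) ?_ ?_ ?_ ?_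
      · intro v hv
        simp only [Finset.coe_filter, Set.mem_setOf_eq, Finset.mem_filter, Finset.mem_univ, true_and] at hv ⊢
        obtain ⟨⟨hvr, hvD⟩, hvi⟩ := hv
        have hev := he2 v hvi
        have hDv := hDB v hvi
        rw [hDv] at hvD
        exact ⟨⟨by omega, hvD⟩, by omega⟩
      · intro w hw
        simp only [Finset.coe_filter, Set.mem_setOf_eq, Finset.mem_filter, Finset.mem_univ, true_and] at hw ⊢
        obtain ⟨⟨hwr, hwD⟩, hwj⟩ := hw
        beta_reduce
        rw [dif_neg (by omega)]
        set v0 : Fin N := ⟨(w : ℕ) - (j - i), by have := w.isLt; omega⟩ with hv0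
        have hvi : ¬ (v0 : ℕ) < i := by simp only [hv0]; omega
        have hev : e v0 = w := Fin.ext (by rw [he2 v0 hvi]; simp only [hv0]; omega)
        have hDv := hDB v0 hvi
        rw [hev] at hDv
        rw [hDv]
        refine ⟨⟨by simp only [hv0]; omega, by omega⟩, hvi⟩
      · intro v hv
        simp only [Finset.coe_filter, Set.mem_setOf_eq, Finset.mem_filter, Finset.mem_univ, true_and] at hv
        obtain ⟨-, hvi⟩ := hv
        have hev := he2 v hvi
        beta_reduce
        rw [dif_neg (by omega)]
        apply Fin.ext
        simp only [Fin.val_mk]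
        omega
      · intro w hw
        simp only [Finset.coe_filter, Set.mem_setOf_eq, Finset.mem_filter, Finset.mem_univ, true_and] at hw
        obtain ⟨-, hwj⟩ := hw
        beta_reduce
        rw [dif_neg (by omega)]
        apply Fin.ext
        rw [he2]
        · simp only [Fin.val_mk]; omega
        · simp only [Fin.val_mk]; omega
end

section
/- Let p, p', e, f ∈ ℕ^Δ be non-increasing vectors with f ≥ e in the prefix-sum dominance order and ω(f) = ω(e). Suppose f⁻ and e⁻ are obtained from f and e respectively by removing d units according to the greedy rule of Lemma 5 (decrementing from the largest entries), so that ω(f⁻) = ω(e⁻) = ω(f) − d. Then f⁻ ≥ e⁻ in the dominance order. -/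
/-- The greedy update of a (1-indexed, non-increasing) vector `p ∈ ℕ^Δ`, removing `d`
units from the largest entries: `p⁻[j] = p[j]` if `j < Δ` and `p[j+1] ≥ d`;
`p⁻[j] = p[j] − (d − p[j+1])` if `j < Δ` and `p[j] ≥ d > p[j+1]`;
`p⁻[j] = p[j+1]` if `j < Δ` and `p[j] < d`; and `p⁻[Δ] = max{0, p[Δ] − d}`. -/
def greedy (Δ d : ℕ) (p : ℕ → ℕ) : ℕ → ℕ := fun j =>
  if j < Δ then
    if d ≤ p (j + 1) then p j
    else if d ≤ p j then p j - (d - p (j + 1))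
    else p (j + 1)
  else p Δ - d

lemma greedy_chain (Δ : ℕ) (p : ℕ → ℕ)
    (hmono : ∀ j, 1 ≤ j → j < Δ → p (j + 1) ≤ p j) :
    ∀ j, 1 ≤ j → j ≤ Δ → p j ≤ p 1 := by
  intro j
  induction j with
  | zero => omega
  | succ k ih =>
    intro _ hle
    rcases Nat.eq_zero_or_pos k with hk | hk
    · subst hk; exact le_rfl
    · exact (hmono k hk (by omega)).trans (ih hk (by omega))

lemma head_le_sum (p : ℕ → ℕ) {j : ℕ} (hj : 1 ≤ j) :
    p 1 ≤ ∑ i ∈ Finset.Icc 1 j, p i :=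
  Finset.single_le_sum (fun i _ => Nat.zero_le _)
    (Finset.mem_Icc.mpr ⟨le_rfl, hj⟩)

lemma greedy_prefix (Δ d : ℕ) (p : ℕ → ℕ)
    (hmono : ∀ j, 1 ≤ j → j < Δ → p (j + 1) ≤ p j) :
    ∀ j, 1 ≤ j → j < Δ →
      ∑ i ∈ Finset.Icc 1 j, greedy Δ d p i
        = min (∑ i ∈ Finset.Icc 1 j, p i)
            ((∑ i ∈ Finset.Icc 1 (j + 1), p i) - min d (p 1)) := by
  intro j
  induction j with
  | zero => omega
  | succ k ih =>
    intro _ hlt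
    have e1 : ∑ i ∈ Finset.Icc 1 (k + 1), greedy Δ d p i
        = (∑ i ∈ Finset.Icc 1 k, greedy Δ d p i) + greedy Δ d p (k + 1) :=
      Finset.sum_Icc_succ_top (by omega) _
    have e2 : ∑ i ∈ Finset.Icc 1 (k + 1), p i
        = (∑ i ∈ Finset.Icc 1 k, p i) + p (k + 1) :=
      Finset.sum_Icc_succ_top (by omega) _
    have e3 : ∑ i ∈ Finset.Icc 1 (k + 1 + 1), p i
        = (∑ i ∈ Finset.Icc 1 (k + 1), p i) + p (k + 1 + 1) :=
      Finset.sum_Icc_succ_top (by omega) _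
    have hg : greedy Δ d p (k + 1)
        = if d ≤ p (k + 1 + 1) then p (k + 1)
          else if d ≤ p (k + 1) then p (k + 1) - (d - p (k + 1 + 1))
          else p (k + 1 + 1) := by
      rw [greedy]; exact if_pos hlt
    have hm1 : p (k + 1 + 1) ≤ p (k + 1) := hmono (k + 1) (by omega) hlt
    have hm2 : p (k + 1) ≤ p 1 := greedy_chain Δ p hmono (k + 1) (by omega) (by omega)
    rcases Nat.eq_zero_or_pos k with hk | hk
    · subst hk
      have e0 : ∑ i ∈ Finset.Icc 1 0, greedy Δ d p i = 0 := by simp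
      have e0' : ∑ i ∈ Finset.Icc 1 0, p i = 0 := by simp
      have h01 : p (0 + 1) = p 1 := rfl
      split_ifs at hg with h1' h2' <;> omega
    · have hIH := ih hk (by omega)
      have hm3 : p 1 ≤ ∑ i ∈ Finset.Icc 1 k, p i := head_le_sum p hk
      split_ifs at hg with h1' h2' <;> omega

lemma d_le_head (Δ d : ℕ) (hΔ : 1 ≤ Δ) (p : ℕ → ℕ)
    (hmono : ∀ j, 1 ≤ j → j < Δ → p (j + 1) ≤ p j)
    (hd : d ≤ ∑ i ∈ Finset.Icc 1 Δ, p i)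
    (hω : ∑ i ∈ Finset.Icc 1 Δ, greedy Δ d p i = (∑ i ∈ Finset.Icc 1 Δ, p i) - d) :
    d ≤ p 1 := by
  rcases Nat.eq_or_lt_of_le hΔ with h1 | h1
  · rw [← h1] at hd; simpa using hd
  · obtain ⟨m, rfl⟩ : ∃ m, Δ = m + 1 := ⟨Δ - 1, by omega⟩
    have hm : 1 ≤ m := by omega
    have hkey := greedy_prefix (m + 1) d p hmono m hm (by omega)
    rw [Finset.sum_Icc_succ_top (by omega : 1 ≤ m + 1),
      Finset.sum_Icc_succ_top (by omega : 1 ≤ m + 1)] at hω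
    rw [Finset.sum_Icc_succ_top (by omega : 1 ≤ m + 1)] at hd
    have hg : greedy (m + 1) d p (m + 1) = p (m + 1) - d := by simp [greedy]
    rw [hg] at hω
    rw [Finset.sum_Icc_succ_top (by omega : 1 ≤ m + 1)] at hkey
    have hm2 : p (m + 1) ≤ p 1 :=
      greedy_chain (m + 1) p hmono (m + 1) (by omega) le_rfl
    have hm3 : p 1 ≤ ∑ i ∈ Finset.Icc 1 m, p i := head_le_sum p hm
    omega

/-- If `f ≥ e` in the prefix-sum dominance order, `ω(f) = ω(e)`, and `f⁻`, `e⁻` are the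
greedy updates removing `d` units (so that `ω(f⁻) = ω(e⁻) = ω(f) − d`), then
`f⁻ ≥ e⁻` in the dominance order. -/
theorem greedy_update_preserves_dominance (Δ d : ℕ) (hΔ : 1 ≤ Δ) (e f : ℕ → ℕ)
    (hemono : ∀ j, 1 ≤ j → j < Δ → e (j + 1) ≤ e j)
    (hfmono : ∀ j, 1 ≤ j → j < Δ → f (j + 1) ≤ f j)
    (hdom : ∀ j, 1 ≤ j → j ≤ Δ → ∑ i ∈ Finset.Icc 1 j, e i ≤ ∑ i ∈ Finset.Icc 1 j, f i)
    (hω : ∑ i ∈ Finset.Icc 1 Δ, f i = ∑ i ∈ Finset.Icc 1 Δ, e i)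
    (hd : d ≤ ∑ i ∈ Finset.Icc 1 Δ, f i)
    (hωf : ∑ i ∈ Finset.Icc 1 Δ, greedy Δ d f i = (∑ i ∈ Finset.Icc 1 Δ, f i) - d)
    (hωe : ∑ i ∈ Finset.Icc 1 Δ, greedy Δ d e i = (∑ i ∈ Finset.Icc 1 Δ, e i) - d) :
    ∀ j, 1 ≤ j → j ≤ Δ →
      ∑ i ∈ Finset.Icc 1 j, greedy Δ d e i ≤ ∑ i ∈ Finset.Icc 1 j, greedy Δ d f i := by
  have hde : d ≤ e 1 := d_le_head Δ d hΔ e hemono (hω ▸ hd) hωe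
  have hdf : d ≤ f 1 := d_le_head Δ d hΔ f hfmono hd hωf
  intro j hj hjΔ
  rcases Nat.eq_or_lt_of_le hjΔ with h | h
  · rw [h, hωe, hωf, hω]
  · rw [greedy_prefix Δ d e hemono j hj h, greedy_prefix Δ d f hfmono j hj h]
    have h1 := hdom j hj hjΔ
    have h2 := hdom (j + 1) (by omega) h
    have he1 : min d (e 1) = d := min_eq_left hde
    have hf1 : min d (f 1) = d := min_eq_left hdf
    omega
end

section
/- If (A, B) is a yes-instance of 3-Partition, i.e., there is a permutation π of {1,...,3m} with a_{π(3i+1)} + a_{π(3i+2)} + a_{π(3i+3)} = B for all 0 ≤ i < m, then the constructed degree sequence S (consisting of the x-elements and the a-elements α_i = (a_i, a_i)) is realizable by a dag with 2mB + 3m vertices. -/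
namespace ThreePart

/- ### generic cardinality lemmas -/

lemma card_subtype_sum {α β : Type*} [Finite α] [Finite β] (P : α ⊕ β → Prop) :
    Nat.card {u : α ⊕ β // P u}
      = Nat.card {x : α // P (.inl x)} + Nat.card {y : β // P (.inr y)} := by
  rw [Nat.card_congr (Equiv.subtypeSum (p := P)), Nat.card_sum]

lemma card_of_existsUnique {γ : Type*} {P : γ → Prop} (h : ∃! x, P x) :
    Nat.card {x // P x} = 1 := by
  obtain ⟨x, hx, hu⟩ := h
  rw [Nat.card_eq_one_iff_unique]
  exact ⟨⟨fun a b => Subtype.ext ((hu _ a.2).trans (hu _ b.2).symm)⟩, ⟨⟨x, hx⟩⟩⟩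

lemma card_of_not {γ : Type*} {P : γ → Prop} (h : ∀ x, ¬ P x) :
    Nat.card {x // P x} = 0 := by
  have : IsEmpty {x // P x} := ⟨fun a => h a.1 a.2⟩
  exact Nat.card_of_isEmpty

lemma card_fin_interval (n s t : ℕ) (ht : t ≤ n) :
    Nat.card {q : Fin n // s ≤ (q : ℕ) ∧ (q : ℕ) < t} = t - s := by
  rw [Nat.card_eq_fintype_card, Fintype.card_subtype]
  have he : (Finset.univ.filter fun q : Fin n => s ≤ (q : ℕ) ∧ (q : ℕ) < t)
      = (Finset.Ico s t).attachFin
          (fun x hx => lt_of_lt_of_le (Finset.mem_Ico.mp hx).2 ht) := by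
    ext q
    simp [Finset.mem_attachFin, Finset.mem_Ico]
  rw [he, Finset.card_attachFin, Nat.card_Ico]

/- ### the position equivalence -/

def posE (m B : ℕ) (hm : 1 ≤ m) : XIdx m B ≃ Fin (2 * m * B) :=
  (((Equiv.refl (Fin B)).sumCongr (finProdFinEquiv.sumCongr (Equiv.refl (Fin B)))).trans
    (((Equiv.refl (Fin B)).sumCongr finSumFinEquiv).trans finSumFinEquiv)).trans
    (finCongr (by
      cases m with
      | zero => omega
      | succ n => simp; ring))

lemma posE_inl (m B : ℕ) (hm : 1 ≤ m) (j : Fin B) :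
    (posE m B hm (.inl j) : ℕ) = (j : ℕ) := by
  simp [posE]

lemma posE_mid (m B : ℕ) (hm : 1 ≤ m) (i : Fin (m - 1)) (j : Fin (2 * B)) :
    (posE m B hm (.inr (.inl (i, j))) : ℕ) = 2 * ((i : ℕ) * B) + B + (j : ℕ) := by
  simp [posE, finSumFinEquiv, Fin.natAdd, Fin.castAdd]
  ring

lemma posE_last (m B : ℕ) (hm : 1 ≤ m) (j : Fin B) :
    (posE m B hm (.inr (.inr j)) : ℕ) = 2 * ((m - 1) * B) + B + (j : ℕ) := by
  simp [posE, finSumFinEquiv, Fin.natAdd, Fin.castAdd]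
  ring

/- ### interval data for the a-vertices -/

def off (b : ℕ → ℕ) (kv : ℕ) : ℕ :=
  if kv % 3 = 0 then 0
  else if kv % 3 = 1 then b (3 * (kv / 3))
  else b (3 * (kv / 3)) + b (3 * (kv / 3) + 1)

def lo (B : ℕ) (b : ℕ → ℕ) (kv : ℕ) : ℕ := 2 * (kv / 3 * B) + off b kv

def InC (B : ℕ) (b : ℕ → ℕ) (kv p : ℕ) : Prop :=
  lo B b kv ≤ p ∧ p < lo B b kv + b kv

def OutC (B : ℕ) (b : ℕ → ℕ) (kv p : ℕ) : Prop :=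
  lo B b kv + B ≤ p ∧ p < lo B b kv + B + b kv

lemma off_add_le {m B : ℕ} (b : ℕ → ℕ)
    (hb : ∀ g, g < m → b (3 * g) + b (3 * g + 1) + b (3 * g + 2) = B)
    (kv : ℕ) (hkv : kv < 3 * m) : off b kv + b kv ≤ B := by
  have h := hb (kv / 3) (by omega)
  rcases (by omega : kv % 3 = 0 ∨ kv % 3 = 1 ∨ kv % 3 = 2) with h0 | h0 | h0
  · have hbk : b kv = b (3 * (kv / 3)) := by congr 1 <;> omega
    unfold off; rw [if_pos h0]; omega
  · have hbk : b kv = b (3 * (kv / 3) + 1) := by congr 1 <;> omega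
    unfold off; rw [if_neg (by omega), if_pos h0]; omega
  · have hbk : b kv = b (3 * (kv / 3) + 2) := by congr 1 <;> omega
    unfold off; rw [if_neg (by omega), if_neg (by omega)]; omega

/- segment localization -/

lemma outC_not {m B : ℕ} (b : ℕ → ℕ)
    (hb : ∀ g, g < m → b (3 * g) + b (3 * g + 1) + b (3 * g + 2) = B)
    (kv : ℕ) (hkv : kv < 3 * m) (g c : ℕ) (hc : c < B) :
    ¬ OutC B b kv (2 * (g * B) + c) := by
  rintro ⟨hlo, hhi⟩
  have hoff := off_add_le b hb kv hkv
  simp only [lo] at hlo hhi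
  rcases Nat.lt_trichotomy g (kv / 3) with h | h | h
  · have h1 : (g + 1) * B ≤ kv / 3 * B := Nat.mul_le_mul_right B h
    have h2 : (g + 1) * B = g * B + B := by ring
    omega
  · rw [← h] at hlo hhi
    omega
  · have h1 : (kv / 3 + 1) * B ≤ g * B := Nat.mul_le_mul_right B h
    have h2 : (kv / 3 + 1) * B = kv / 3 * B + B := by ring
    omega

lemma inC_not {m B : ℕ} (b : ℕ → ℕ)
    (hb : ∀ g, g < m → b (3 * g) + b (3 * g + 1) + b (3 * g + 2) = B)
    (kv : ℕ) (hkv : kv < 3 * m) (g c : ℕ) (hc : c < B) :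
    ¬ InC B b kv (2 * (g * B) + B + c) := by
  rintro ⟨hlo, hhi⟩
  have hoff := off_add_le b hb kv hkv
  simp only [lo] at hlo hhi
  rcases Nat.lt_trichotomy g (kv / 3) with h | h | h
  · have h1 : (g + 1) * B ≤ kv / 3 * B := Nat.mul_le_mul_right B h
    have h2 : (g + 1) * B = g * B + B := by ring
    omega
  · rw [← h] at hlo hhi
    omega
  · have h1 : (kv / 3 + 1) * B ≤ g * B := Nat.mul_le_mul_right B h
    have h2 : (kv / 3 + 1) * B = kv / 3 * B + B := by ring
    omega

/-- which residue the point `c` selects inside a group -/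
def resOf (b : ℕ → ℕ) (g c : ℕ) : ℕ :=
  if c < b (3 * g) then 0 else if c < b (3 * g) + b (3 * g + 1) then 1 else 2

lemma outC_iff {m B : ℕ} (b : ℕ → ℕ)
    (hb : ∀ g, g < m → b (3 * g) + b (3 * g + 1) + b (3 * g + 2) = B)
    (kv : ℕ) (hkv : kv < 3 * m) (g c : ℕ) (hg : g < m) (hc : c < B) :
    OutC B b kv (2 * (g * B) + B + c) ↔ kv = 3 * g + resOf b g c := by
  have hsum := hb g hg
  have hoff := off_add_le b hb kv hkv
  constructor
  · rintro ⟨hlo, hhi⟩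
    simp only [lo] at hlo hhi
    have hgeq : kv / 3 = g := by
      rcases Nat.lt_trichotomy g (kv / 3) with h | h | h
      · have h1 : (g + 1) * B ≤ kv / 3 * B := Nat.mul_le_mul_right B h
        have h2 : (g + 1) * B = g * B + B := by ring
        omega
      · omega
      · have h1 : (kv / 3 + 1) * B ≤ g * B := Nat.mul_le_mul_right B h
        have h2 : (kv / 3 + 1) * B = kv / 3 * B + B := by ring
        omega
    rcases (by omega : kv % 3 = 0 ∨ kv % 3 = 1 ∨ kv % 3 = 2) with h0 | h0 | h0
    · have hbk : b kv = b (3 * g) := by congr 1 <;> omega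
      simp only [off, h0, hgeq] at hlo hhi
      norm_num at hlo hhi
      unfold resOf
      rw [if_pos (by omega : c < b (3 * g))]
      omega
    · have hbk : b kv = b (3 * g + 1) := by congr 1 <;> omega
      simp only [off, h0, hgeq] at hlo hhi
      norm_num at hlo hhi
      unfold resOf
      rw [if_neg (by omega : ¬ c < b (3 * g)),
        if_pos (by omega : c < b (3 * g) + b (3 * g + 1))]
      omega
    · have hbk : b kv = b (3 * g + 2) := by congr 1 <;> omega
      simp only [off, h0, hgeq] at hlo hhi
      norm_num at hlo hhi
      unfold resOf
      rw [if_neg (by omega : ¬ c < b (3 * g)),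
        if_neg (by omega : ¬ c < b (3 * g) + b (3 * g + 1))]
      omega
  · intro h
    unfold resOf at h
    by_cases h1 : c < b (3 * g)
    · rw [if_pos h1] at h
      have d1 : kv / 3 = g := by omega
      have d2 : kv % 3 = 0 := by omega
      have hbk : b kv = b (3 * g) := by congr 1 <;> omega
      simp only [OutC, lo, off, d1, d2]
      norm_num
      omega
    · rw [if_neg h1] at h
      by_cases h2 : c < b (3 * g) + b (3 * g + 1)
      · rw [if_pos h2] at h
        have d1 : kv / 3 = g := by omega
        have d2 : kv % 3 = 1 := by omega
        have hbk : b kv = b (3 * g + 1) := by congr 1 <;> omega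
        simp only [OutC, lo, off, d1, d2]
        norm_num
        omega
      · rw [if_neg h2] at h
        have d1 : kv / 3 = g := by omega
        have d2 : kv % 3 = 2 := by omega
        have hbk : b kv = b (3 * g + 2) := by congr 1 <;> omega
        simp only [OutC, lo, off, d1, d2]
        norm_num
        omega

lemma inC_iff {m B : ℕ} (b : ℕ → ℕ)
    (hb : ∀ g, g < m → b (3 * g) + b (3 * g + 1) + b (3 * g + 2) = B)
    (kv : ℕ) (hkv : kv < 3 * m) (g c : ℕ) (hg : g < m) (hc : c < B) :
    InC B b kv (2 * (g * B) + c) ↔ kv = 3 * g + resOf b g c := by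
  have hsum := hb g hg
  have hoff := off_add_le b hb kv hkv
  constructor
  · rintro ⟨hlo, hhi⟩
    simp only [lo] at hlo hhi
    have hgeq : kv / 3 = g := by
      rcases Nat.lt_trichotomy g (kv / 3) with h | h | h
      · have h1 : (g + 1) * B ≤ kv / 3 * B := Nat.mul_le_mul_right B h
        have h2 : (g + 1) * B = g * B + B := by ring
        omega
      · omega
      · have h1 : (kv / 3 + 1) * B ≤ g * B := Nat.mul_le_mul_right B h
        have h2 : (kv / 3 + 1) * B = kv / 3 * B + B := by ring
        omega
    rcases (by omega : kv % 3 = 0 ∨ kv % 3 = 1 ∨ kv % 3 = 2) with h0 | h0 | h0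
    · have hbk : b kv = b (3 * g) := by congr 1 <;> omega
      simp only [off, h0, hgeq] at hlo hhi
      norm_num at hlo hhi
      unfold resOf
      rw [if_pos (by omega : c < b (3 * g))]
      omega
    · have hbk : b kv = b (3 * g + 1) := by congr 1 <;> omega
      simp only [off, h0, hgeq] at hlo hhi
      norm_num at hlo hhi
      unfold resOf
      rw [if_neg (by omega : ¬ c < b (3 * g)),
        if_pos (by omega : c < b (3 * g) + b (3 * g + 1))]
      omega
    · have hbk : b kv = b (3 * g + 2) := by congr 1 <;> omega
      simp only [off, h0, hgeq] at hlo hhi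
      norm_num at hlo hhi
      unfold resOf
      rw [if_neg (by omega : ¬ c < b (3 * g)),
        if_neg (by omega : ¬ c < b (3 * g) + b (3 * g + 1))]
      omega
  · intro h
    unfold resOf at h
    by_cases h1 : c < b (3 * g)
    · rw [if_pos h1] at h
      have d1 : kv / 3 = g := by omega
      have d2 : kv % 3 = 0 := by omega
      have hbk : b kv = b (3 * g) := by congr 1 <;> omega
      simp only [InC, lo, off, d1, d2]
      norm_num
      omega
    · rw [if_neg h1] at h
      by_cases h2 : c < b (3 * g) + b (3 * g + 1)
      · rw [if_pos h2] at h
        have d1 : kv / 3 = g := by omega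
        have d2 : kv % 3 = 1 := by omega
        have hbk : b kv = b (3 * g + 1) := by congr 1 <;> omega
        simp only [InC, lo, off, d1, d2]
        norm_num
        omega
      · rw [if_neg h2] at h
        have d1 : kv / 3 = g := by omega
        have d2 : kv % 3 = 2 := by omega
        have hbk : b kv = b (3 * g + 2) := by congr 1 <;> omega
        simp only [InC, lo, off, d1, d2]
        norm_num
        omega

/- ### the arc relation -/

def Arc (m B : ℕ) (hm : 1 ≤ m) (b : ℕ → ℕ) (k : Fin (3 * m) → ℕ) :
    (XIdx m B ⊕ Fin (3 * m)) → (XIdx m B ⊕ Fin (3 * m)) → Prop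
  | .inl x, .inl y => (posE m B hm x : ℕ) < (posE m B hm y : ℕ)
  | .inl x, .inr i => InC B b (k i) (posE m B hm x : ℕ)
  | .inr i, .inl y => OutC B b (k i) (posE m B hm y : ℕ)
  | .inr _, .inr _ => False

lemma acyclic_of_rank {V : Type*} (A : V → V → Prop) (f : V → ℕ)
    (h : ∀ u v, A u v → f u < f v) : Acyclic A := by
  intro v hv
  have key : ∀ x y, Relation.TransGen A x y → f x < f y := by
    intro x y hxy
    induction hxy with
    | single h' => exact h _ _ h'
    | tail _ h' ih => exact ih.trans (h _ _ h')
  exact lt_irrefl _ (key v v hv)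

section Counting

lemma card_pos_lt (m B : ℕ) (hm : 1 ≤ m) (t : ℕ) (ht : t ≤ 2 * m * B) :
    Nat.card {x : XIdx m B // (posE m B hm x : ℕ) < t} = t := by
  rw [Nat.card_congr ((posE m B hm).subtypeEquiv
    (q := fun q : Fin (2 * m * B) => (q : ℕ) < t) (fun x => Iff.rfl))]
  rw [Nat.card_congr (Equiv.subtypeEquivRight
    (fun q : Fin (2 * m * B) => (by omega : (q : ℕ) < t ↔ 0 ≤ (q : ℕ) ∧ (q : ℕ) < t)))]
  rw [card_fin_interval _ _ _ ht]
  omega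

lemma card_pos_gt (m B : ℕ) (hm : 1 ≤ m) (s : ℕ) (hs : s < 2 * m * B) :
    Nat.card {x : XIdx m B // s < (posE m B hm x : ℕ)} = 2 * m * B - (s + 1) := by
  rw [Nat.card_congr ((posE m B hm).subtypeEquiv
    (q := fun q : Fin (2 * m * B) => s < (q : ℕ)) (fun x => Iff.rfl))]
  rw [Nat.card_congr (Equiv.subtypeEquivRight
    (fun q : Fin (2 * m * B) => (by have := q.isLt; omega :
      s < (q : ℕ) ↔ s + 1 ≤ (q : ℕ) ∧ (q : ℕ) < 2 * m * B)))]
  rw [card_fin_interval _ _ _ le_rfl]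

lemma card_pos_between (m B : ℕ) (hm : 1 ≤ m) (s t : ℕ) (ht : t ≤ 2 * m * B) :
    Nat.card {x : XIdx m B // s ≤ (posE m B hm x : ℕ) ∧ (posE m B hm x : ℕ) < t}
      = t - s := by
  rw [Nat.card_congr ((posE m B hm).subtypeEquiv
    (q := fun q : Fin (2 * m * B) => s ≤ (q : ℕ) ∧ (q : ℕ) < t) (fun x => Iff.rfl))]
  exact card_fin_interval _ _ _ ht

end Counting

section Degrees

lemma resOf_lt (b : ℕ → ℕ) (g c : ℕ) : resOf b g c < 3 := by
  unfold resOf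
  split
  · omega
  · split <;> omega

lemma outC_existsUnique (m B : ℕ) (b : ℕ → ℕ) (k : Fin (3 * m) → ℕ)
    (hb : ∀ g, g < m → b (3 * g) + b (3 * g + 1) + b (3 * g + 2) = B)
    (hkinj : Function.Injective k) (hklt : ∀ i, k i < 3 * m)
    (hksurj : ∀ n, n < 3 * m → ∃ i, k i = n) (g c : ℕ) (hg : g < m) (hc : c < B) :
    ∃! i : Fin (3 * m), OutC B b (k i) (2 * (g * B) + B + c) := by
  obtain ⟨i0, hi0⟩ := hksurj (3 * g + resOf b g c)
    (by have := resOf_lt b g c; omega)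
  refine ⟨i0, (outC_iff b hb (k i0) (hklt i0) g c hg hc).mpr hi0, ?_⟩
  intro i' hi'
  apply hkinj
  rw [hi0]
  exact (outC_iff b hb (k i') (hklt i') g c hg hc).mp hi'

lemma inC_existsUnique (m B : ℕ) (b : ℕ → ℕ) (k : Fin (3 * m) → ℕ)
    (hb : ∀ g, g < m → b (3 * g) + b (3 * g + 1) + b (3 * g + 2) = B)
    (hkinj : Function.Injective k) (hklt : ∀ i, k i < 3 * m)
    (hksurj : ∀ n, n < 3 * m → ∃ i, k i = n) (g c : ℕ) (hg : g < m) (hc : c < B) :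
    ∃! i : Fin (3 * m), InC B b (k i) (2 * (g * B) + c) := by
  obtain ⟨i0, hi0⟩ := hksurj (3 * g + resOf b g c)
    (by have := resOf_lt b g c; omega)
  refine ⟨i0, (inC_iff b hb (k i0) (hklt i0) g c hg hc).mpr hi0, ?_⟩
  intro i' hi'
  apply hkinj
  rw [hi0]
  exact (inC_iff b hb (k i') (hklt i') g c hg hc).mp hi'

lemma indeg_x_even (m B : ℕ) (hm : 1 ≤ m) (b : ℕ → ℕ) (k : Fin (3 * m) → ℕ)
    (hb : ∀ g, g < m → b (3 * g) + b (3 * g + 1) + b (3 * g + 2) = B)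
    (hklt : ∀ i, k i < 3 * m) (v : XIdx m B) (g c : ℕ) (hg : g < m) (hc : c < B)
    (hp : (posE m B hm v : ℕ) = 2 * (g * B) + c) :
    indeg (Arc m B hm b k) (.inl v) = (posE m B hm v : ℕ) := by
  have hsplit : indeg (Arc m B hm b k) (.inl v)
      = Nat.card {x : XIdx m B // (posE m B hm x : ℕ) < (posE m B hm v : ℕ)}
        + Nat.card {i : Fin (3 * m) // OutC B b (k i) (posE m B hm v : ℕ)} :=
    card_subtype_sum (fun u => Arc m B hm b k u (.inl v))
  rw [hsplit, card_pos_lt m B hm _ (posE m B hm v).isLt.le,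
    card_of_not (fun i => by
      rw [hp]; exact outC_not b hb (k i) (hklt i) g c hc)]
  omega

lemma indeg_x_odd (m B : ℕ) (hm : 1 ≤ m) (b : ℕ → ℕ) (k : Fin (3 * m) → ℕ)
    (hb : ∀ g, g < m → b (3 * g) + b (3 * g + 1) + b (3 * g + 2) = B)
    (hkinj : Function.Injective k) (hklt : ∀ i, k i < 3 * m)
    (hksurj : ∀ n, n < 3 * m → ∃ i, k i = n) (v : XIdx m B) (g c : ℕ) (hg : g < m) (hc : c < B)
    (hp : (posE m B hm v : ℕ) = 2 * (g * B) + B + c) :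
    indeg (Arc m B hm b k) (.inl v) = (posE m B hm v : ℕ) + 1 := by
  have hsplit : indeg (Arc m B hm b k) (.inl v)
      = Nat.card {x : XIdx m B // (posE m B hm x : ℕ) < (posE m B hm v : ℕ)}
        + Nat.card {i : Fin (3 * m) // OutC B b (k i) (posE m B hm v : ℕ)} :=
    card_subtype_sum (fun u => Arc m B hm b k u (.inl v))
  rw [hsplit, card_pos_lt m B hm _ (posE m B hm v).isLt.le,
    card_of_existsUnique (by
      rw [hp]; exact outC_existsUnique m B b k hb hkinj hklt hksurj g c hg hc)]

lemma outdeg_x_even (m B : ℕ) (hm : 1 ≤ m) (b : ℕ → ℕ) (k : Fin (3 * m) → ℕ)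
    (hb : ∀ g, g < m → b (3 * g) + b (3 * g + 1) + b (3 * g + 2) = B)
    (hkinj : Function.Injective k) (hklt : ∀ i, k i < 3 * m)
    (hksurj : ∀ n, n < 3 * m → ∃ i, k i = n) (v : XIdx m B) (g c : ℕ) (hg : g < m) (hc : c < B)
    (hp : (posE m B hm v : ℕ) = 2 * (g * B) + c) :
    outdeg (Arc m B hm b k) (.inl v)
      = 2 * m * B - ((posE m B hm v : ℕ) + 1) + 1 := by
  have hsplit : outdeg (Arc m B hm b k) (.inl v)
      = Nat.card {y : XIdx m B // (posE m B hm v : ℕ) < (posE m B hm y : ℕ)}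
        + Nat.card {i : Fin (3 * m) // InC B b (k i) (posE m B hm v : ℕ)} :=
    card_subtype_sum (fun u => Arc m B hm b k (.inl v) u)
  rw [hsplit, card_pos_gt m B hm _ (posE m B hm v).isLt,
    card_of_existsUnique (by
      rw [hp]; exact inC_existsUnique m B b k hb hkinj hklt hksurj g c hg hc)]

lemma outdeg_x_odd (m B : ℕ) (hm : 1 ≤ m) (b : ℕ → ℕ) (k : Fin (3 * m) → ℕ)
    (hb : ∀ g, g < m → b (3 * g) + b (3 * g + 1) + b (3 * g + 2) = B)
    (hklt : ∀ i, k i < 3 * m) (v : XIdx m B) (g c : ℕ) (hg : g < m) (hc : c < B)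
    (hp : (posE m B hm v : ℕ) = 2 * (g * B) + B + c) :
    outdeg (Arc m B hm b k) (.inl v)
      = 2 * m * B - ((posE m B hm v : ℕ) + 1) := by
  have hsplit : outdeg (Arc m B hm b k) (.inl v)
      = Nat.card {y : XIdx m B // (posE m B hm v : ℕ) < (posE m B hm y : ℕ)}
        + Nat.card {i : Fin (3 * m) // InC B b (k i) (posE m B hm v : ℕ)} :=
    card_subtype_sum (fun u => Arc m B hm b k (.inl v) u)
  rw [hsplit, card_pos_gt m B hm _ (posE m B hm v).isLt,
    card_of_not (fun i => by
      rw [hp]; exact inC_not b hb (k i) (hklt i) g c hc)]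
  omega

/-- the rank function certifying acyclicity -/
def rank (m B : ℕ) (hm : 1 ≤ m) (k : Fin (3 * m) → ℕ) :
    (XIdx m B ⊕ Fin (3 * m)) → ℕ
  | .inl x => 2 * (posE m B hm x : ℕ)
  | .inr i => 2 * (2 * (k i / 3 * B) + B) - 1

theorem main (m B : ℕ) (hm : 1 ≤ m) (hB : 1 ≤ B) (b : ℕ → ℕ) (k : Fin (3 * m) → ℕ)
    (hb : ∀ g, g < m → b (3 * g) + b (3 * g + 1) + b (3 * g + 2) = B)
    (hkinj : Function.Injective k) (hklt : ∀ i, k i < 3 * m)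
    (hksurj : ∀ n, n < 3 * m → ∃ i, k i = n) :
    Acyclic (Arc m B hm b k) ∧
    (∀ v : XIdx m B,
      indeg (Arc m B hm b k) (.inl v) = xInDeg m B v ∧
      outdeg (Arc m B hm b k) (.inl v) = xOutDeg m B v) ∧
    (∀ i : Fin (3 * m),
      indeg (Arc m B hm b k) (.inr i) = b (k i) ∧
      outdeg (Arc m B hm b k) (.inr i) = b (k i)) := by
  have hml : 2 * ((m - 1) * B) + B + B = 2 * m * B := by
    rw [show 2 * ((m - 1) * B) + B + B = (2 * (m - 1) + 2) * B from by ring,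
      show 2 * (m - 1) + 2 = 2 * m from by omega]
  refine ⟨?_, ?_, ?_⟩
  · -- acyclicity
    apply acyclic_of_rank _ (rank m B hm k)
    rintro (x | i) (y | j) h
    · have h' : (posE m B hm x : ℕ) < (posE m B hm y : ℕ) := h
      show 2 * (posE m B hm x : ℕ) < 2 * (posE m B hm y : ℕ)
      omega
    · have h' : InC B b (k j) (posE m B hm x : ℕ) := h
      obtain ⟨h1, h2⟩ := h'
      have hoff := off_add_le b hb (k j) (hklt j)
      simp only [lo] at h1 h2
      show 2 * (posE m B hm x : ℕ) < 2 * (2 * (k j / 3 * B) + B) - 1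
      omega
    · have h' : OutC B b (k i) (posE m B hm y : ℕ) := h
      obtain ⟨h1, h2⟩ := h'
      have hoff := off_add_le b hb (k i) (hklt i)
      simp only [lo] at h1 h2
      show 2 * (2 * (k i / 3 * B) + B) - 1 < 2 * (posE m B hm y : ℕ)
      omega
    · exact (h : False).elim
  · -- x-vertices
    rintro (j | ⟨i, j⟩ | j)
    · have hp : (posE m B hm (.inl j) : ℕ) = 2 * (0 * B) + (j : ℕ) := by
        rw [posE_inl]; ring
      constructor
      · rw [indeg_x_even m B hm b k hb hklt _ 0 (j : ℕ) (by omega) j.isLt hp,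
          posE_inl]
        rfl
      · rw [outdeg_x_even m B hm b k hb hkinj hklt hksurj _ 0 (j : ℕ)
          (by omega) j.isLt hp, posE_inl]
        show _ = 2 * m * B - (j : ℕ)
        have hj := j.isLt
        omega
    · have hpm := posE_mid m B hm i j
      have him : (i : ℕ) < m - 1 := i.isLt
      have hx : (2 * ((i : ℕ) + 1) - 1) * B = 2 * ((i : ℕ) * B) + B := by
        rw [show 2 * ((i : ℕ) + 1) - 1 = 2 * (i : ℕ) + 1 from by omega]; ring
      have hy : (2 * m - 2 * ((i : ℕ) + 1) + 1) * B + (2 * ((i : ℕ) * B) + B)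
          = 2 * m * B := by
        rw [show 2 * ((i : ℕ) * B) + B = (2 * (i : ℕ) + 1) * B from by ring,
          ← Nat.add_mul,
          show 2 * m - 2 * ((i : ℕ) + 1) + 1 + (2 * (i : ℕ) + 1) = 2 * m from by omega]
      by_cases hj : (j : ℕ) < B
      · constructor
        · rw [indeg_x_odd m B hm b k hb hkinj hklt hksurj _ (i : ℕ) (j : ℕ)
            (by omega) hj hpm, hpm]
          simp only [xInDeg, if_pos hj]
          omega
        · rw [outdeg_x_odd m B hm b k hb hklt _ (i : ℕ) (j : ℕ)
            (by omega) hj hpm, hpm]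
          simp only [xOutDeg, if_pos hj]
          omega
      · have hjB : B ≤ (j : ℕ) := by omega
        have hj2 := j.isLt
        have hib : ((i : ℕ) + 1) * B = (i : ℕ) * B + B := by ring
        have hp' : (posE m B hm (.inr (.inl (i, j))) : ℕ)
            = 2 * (((i : ℕ) + 1) * B) + ((j : ℕ) - B) := by
          rw [hpm]; omega
        constructor
        · rw [indeg_x_even m B hm b k hb hklt _ ((i : ℕ) + 1) ((j : ℕ) - B)
            (by omega) (by omega) hp', hpm]
          simp only [xInDeg, if_neg hj]
          omega
        · rw [outdeg_x_even m B hm b k hb hkinj hklt hksurj _ ((i : ℕ) + 1)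
            ((j : ℕ) - B) (by omega) (by omega) hp', hpm]
          simp only [xOutDeg, if_neg hj]
          have hlt : 2 * ((i : ℕ) * B) + B + (j : ℕ) < 2 * m * B := by
            rw [← hpm]; exact (posE m B hm _).isLt
          omega
    · have hp := posE_last m B hm j
      have hz : (2 * m - 1) * B = 2 * ((m - 1) * B) + B := by
        rw [show 2 * m - 1 = 2 * (m - 1) + 1 from by omega]; ring
      have hj := j.isLt
      constructor
      · rw [indeg_x_odd m B hm b k hb hkinj hklt hksurj _ (m - 1) (j : ℕ)
          (by omega) hj hp, hp]
        simp only [xInDeg]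
        omega
      · rw [outdeg_x_odd m B hm b k hb hklt _ (m - 1) (j : ℕ)
          (by omega) hj hp, hp]
        simp only [xOutDeg]
        omega
  · -- a-vertices
    intro i
    have hoff := off_add_le b hb (k i) (hklt i)
    have hgB : k i / 3 * B ≤ (m - 1) * B :=
      Nat.mul_le_mul_right B (by have := hklt i; omega)
    constructor
    · have hsplit : indeg (Arc m B hm b k) (.inr i)
          = Nat.card {x : XIdx m B // InC B b (k i) (posE m B hm x : ℕ)}
            + Nat.card {j : Fin (3 * m) // False} :=
        card_subtype_sum (fun u => Arc m B hm b k u (.inr i))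
      rw [hsplit, card_of_not (fun j (h : False) => h)]
      have hc : Nat.card {x : XIdx m B // InC B b (k i) (posE m B hm x : ℕ)}
          = (lo B b (k i) + b (k i)) - lo B b (k i) := by
        have h := card_pos_between m B hm (lo B b (k i)) (lo B b (k i) + b (k i))
          (by simp only [lo]; omega)
        exact h
      rw [hc]
      omega
    · have hsplit : outdeg (Arc m B hm b k) (.inr i)
          = Nat.card {y : XIdx m B // OutC B b (k i) (posE m B hm y : ℕ)}
            + Nat.card {j : Fin (3 * m) // False} :=
        card_subtype_sum (fun u => Arc m B hm b k (.inr i) u)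
      rw [hsplit, card_of_not (fun j (h : False) => h)]
      have hc : Nat.card {y : XIdx m B // OutC B b (k i) (posE m B hm y : ℕ)}
          = (lo B b (k i) + B + b (k i)) - (lo B b (k i) + B) := by
        have h := card_pos_between m B hm (lo B b (k i) + B)
          (lo B b (k i) + B + b (k i)) (by simp only [lo]; omega)
        exact h
      rw [hc]
      omega

end Degrees

end ThreePart

/-- If `(A, B)` is a yes-instance of 3-Partition, then the constructed degree sequence
(the x-elements together with the a-elements `αᵢ = (aᵢ, aᵢ)`) is realizable by a dag
on `2mB + 3m` vertices. -/
theorem yes_instance_realizable (m B : ℕ) (hm : 1 ≤ m) (hB : 1 ≤ B)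
    (a : Fin (3 * m) → ℕ) (hsum : ∑ i, a i = m * B)
    (hbound : ∀ i, B < 4 * a i ∧ 2 * a i < B)
    (π : Equiv.Perm (Fin (3 * m)))
    (hπ : ∀ i, ∀ hi : i < m,
      a (π ⟨3 * i, by omega⟩) + a (π ⟨3 * i + 1, by omega⟩) + a (π ⟨3 * i + 2, by omega⟩) = B) :
    ∃ A : (XIdx m B ⊕ Fin (3 * m)) → (XIdx m B ⊕ Fin (3 * m)) → Prop,
      Acyclic A ∧
      (∀ v : XIdx m B,
        indeg A (.inl v) = xInDeg m B v ∧ outdeg A (.inl v) = xOutDeg m B v) ∧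
      (∀ i : Fin (3 * m), indeg A (.inr i) = a i ∧ outdeg A (.inr i) = a i) := by
  classical
  set b : ℕ → ℕ := fun n => if h : n < 3 * m then a (π ⟨n, h⟩) else 0 with hbdef
  set k : Fin (3 * m) → ℕ := fun i => ((π.symm i : Fin (3 * m)) : ℕ) with hkdef
  have hb : ∀ g, g < m → b (3 * g) + b (3 * g + 1) + b (3 * g + 2) = B := by
    intro g hg
    simp only [hbdef]
    rw [dif_pos (by omega : 3 * g < 3 * m), dif_pos (by omega : 3 * g + 1 < 3 * m),
      dif_pos (by omega : 3 * g + 2 < 3 * m)]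
    exact hπ g hg
  have hkinj : Function.Injective k := fun i j h => π.symm.injective (Fin.val_injective h)
  have hklt : ∀ i, k i < 3 * m := fun i => (π.symm i).isLt
  have hksurj : ∀ n, n < 3 * m → ∃ i, k i = n := fun n hn => ⟨π ⟨n, hn⟩, by simp [hkdef]⟩
  have ha : ∀ i, b (k i) = a i := by
    intro i
    simp only [hbdef, hkdef]
    rw [dif_pos (π.symm i).isLt]
    congr 1
    simp
  obtain ⟨hac, hx, haa⟩ := ThreePart.main m B hm hB b k hb hkinj hklt hksurj
  exact ⟨ThreePart.Arc m B hm b k, hac, hx, fun i => by rw [← ha i]; exact haa i⟩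
end
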